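/- arXiv:1112.4632 — 11 statements merged into one kernel-verified Lean document; each statement's English description precedes it below -/
import Mathlib

section
/- In a complete graph with an even number of vertices and metric edge weights, there exists a perfect matching M that is stable, i.e., there is no pair of vertices u, v unmatched to each other with w(u,v) < min{w(u, M(u)), w(v, M(v))}. -/
lemma greedy_matching (N : ℕ) (w : Fin N → Fin N → ℝ)
    (hsymm : ∀ u v, w u v = w v u) :
    ∀ (s : Finset (Fin N)), Even s.card →
      ∃ M : Fin N → Fin N,
        (∀ x ∈ s, M x ∈ s) ∧ (∀ x ∈ s, M (M x) = x) ∧ (∀ x ∈ s, M x ≠ x) ∧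
        (∀ x ∉ s, M x = x) ∧
        (∀ u ∈ s, ∀ v ∈ s, u ≠ v → M u ≠ v →
          ¬ (w u v < min (w u (M u)) (w v (M v)))) := by
  intro s
  induction s using Finset.strongInduction with
  | _ s ih =>
    intro hev
    rcases s.eq_empty_or_nonempty with rfl | hne
    · exact ⟨id, by simp, by simp, by simp, by simp, by simp⟩
    · have hcard : 1 < s.card := by
        rcases hev with ⟨k, hk⟩
        have := hne.card_pos
        omega
      have hod : s.offDiag.Nonempty := by
        obtain ⟨a, ha, b, hb, hab⟩ := Finset.one_lt_card.mp hcard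
        exact ⟨(a, b), Finset.mem_offDiag.mpr ⟨ha, hb, hab⟩⟩
      obtain ⟨p, hp, hmin⟩ := s.offDiag.exists_min_image (fun q => w q.1 q.2) hod
      obtain ⟨ha, hb, hab⟩ := Finset.mem_offDiag.mp hp
      set a := p.1 with ha'
      set b := p.2 with hb'
      have hminw : ∀ u ∈ s, ∀ v ∈ s, u ≠ v → w a b ≤ w u v := by
        intro u hu v hv huv
        exact hmin (u, v) (Finset.mem_offDiag.mpr ⟨hu, hv, huv⟩)
      set s' := s \ {a, b} with hs'
      have hsub : {a, b} ⊆ s := by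
        intro x hx
        rcases Finset.mem_insert.mp hx with rfl | hx
        · exact ha
        · rw [Finset.mem_singleton.mp hx]; exact hb
      have hcard' : s'.card = s.card - 2 := by
        rw [hs', Finset.card_sdiff_of_subset hsub, Finset.card_insert_of_notMem (by simp [hab]),
          Finset.card_singleton]
      have hss : s' ⊂ s := Finset.sdiff_ssubset hsub ⟨a, by simp⟩
      have hev' : Even s'.card := by
        rcases hev with ⟨k, hk⟩
        refine ⟨k - 1, by omega⟩
      obtain ⟨M', hmem', hinv', hnf', hfix', hstab'⟩ := ih s' hss hev'
      have hanotin : a ∉ s' := by simp [hs']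
      have hbnotin : b ∉ s' := by simp [hs']
      set M : Fin N → Fin N := fun x => if x = a then b else if x = b then a else M' x
        with hM
      have hMa : M a = b := by simp [hM]
      have hMb : M b = a := by simp [hM, hab.symm]
      have hMother : ∀ x, x ≠ a → x ≠ b → M x = M' x := by
        intro x hxa hxb; simp [hM, hxa, hxb]
      have hmem'' : ∀ x ∈ s', M x = M' x ∧ M x ∈ s' := by
        intro x hx
        have hxa : x ≠ a := by rintro rfl; exact hanotin hx
        have hxb : x ≠ b := by rintro rfl; exact hbnotin hx
        rw [hMother x hxa hxb]
        exact ⟨rfl, hmem' x hx⟩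
      refine ⟨M, ?_, ?_, ?_, ?_, ?_⟩
      · intro x hx
        by_cases hxa : x = a
        · subst hxa; rw [hMa]; exact hb
        by_cases hxb : x = b
        · subst hxb; rw [hMb]; exact ha
        have hx' : x ∈ s' := by simp [hs', hxa, hxb, hx]
        exact Finset.mem_of_subset (Finset.sdiff_subset) (hmem'' x hx').2
      · intro x hx
        by_cases hxa : x = a
        · subst hxa; rw [hMa, hMb]
        by_cases hxb : x = b
        · subst hxb; rw [hMb, hMa]
        have hx' : x ∈ s' := by simp [hs', hxa, hxb, hx]
        rw [(hmem'' x hx').1, (hmem'' (M' x) (hmem' x hx')).1]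
        exact hinv' x hx'
      · intro x hx
        by_cases hxa : x = a
        · subst hxa; rw [hMa]; exact hab.symm
        by_cases hxb : x = b
        · subst hxb; rw [hMb]; exact hab
        have hx' : x ∈ s' := by simp [hs', hxa, hxb, hx]
        rw [(hmem'' x hx').1]
        exact hnf' x hx'
      · intro x hx
        have hxa : x ≠ a := by rintro rfl; exact hx ha
        have hxb : x ≠ b := by rintro rfl; exact hx hb
        rw [hMother x hxa hxb]
        exact hfix' x (fun hx' => hx (Finset.mem_of_subset Finset.sdiff_subset hx'))
      · intro u hu v hv huv hMuv
        rw [not_lt]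
        by_cases hua : u = a
        · calc min (w u (M u)) (w v (M v)) ≤ w u (M u) := min_le_left _ _
            _ = w a b := by rw [hua, hMa]
            _ ≤ w u v := hminw u hu v hv huv
        by_cases hub : u = b
        · calc min (w u (M u)) (w v (M v)) ≤ w u (M u) := min_le_left _ _
            _ = w b a := by rw [hub, hMb]
            _ = w a b := hsymm b a
            _ ≤ w u v := hminw u hu v hv huv
        by_cases hva : v = a
        · calc min (w u (M u)) (w v (M v)) ≤ w v (M v) := min_le_right _ _
            _ = w a b := by rw [hva, hMa]
            _ ≤ w v u := hminw v hv u hu huv.symm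
            _ = w u v := hsymm v u
        by_cases hvb : v = b
        · calc min (w u (M u)) (w v (M v)) ≤ w v (M v) := min_le_right _ _
            _ = w b a := by rw [hvb, hMb]
            _ = w a b := hsymm b a
            _ ≤ w v u := hminw v hv u hu huv.symm
            _ = w u v := hsymm v u
        have hu' : u ∈ s' := by simp [hs', hua, hub, hu]
        have hv' : v ∈ s' := by simp [hs', hva, hvb, hv]
        rw [(hmem'' u hu').1, (hmem'' v hv').1]
        rw [← not_lt]
        refine hstab' u hu' v hv' huv ?_
        rw [← (hmem'' u hu').1]; exact hMuv

/-- Every complete metric graph on an even number of vertices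
admits a stable perfect matching. A perfect matching is encoded as a
fixed-point-free involution `M`; `M x` is the partner of `x`. -/
theorem stmt_0 (n : ℕ) (hn : 0 < n) (w : Fin (2*n) → Fin (2*n) → ℝ)
    (hsymm : ∀ u v, w u v = w v u)
    (hpos : ∀ u v, u ≠ v → 0 < w u v)
    (htri : ∀ u v x, u ≠ v → v ≠ x → u ≠ x → w u x ≤ w u v + w v x) :
    ∃ M : Fin (2*n) → Fin (2*n), Function.Involutive M ∧ (∀ x, M x ≠ x) ∧
      ∀ u v : Fin (2*n), u ≠ v → M u ≠ v →
        ¬ (w u v < min (w u (M u)) (w v (M v))) := by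
  obtain ⟨M, _, hinv, hnf, _, hstab⟩ :=
    greedy_matching (2*n) w hsymm Finset.univ (by rw [Finset.card_univ, Fintype.card_fin]; exact even_two_mul n)
  exact ⟨M, fun x => hinv x (Finset.mem_univ x), fun x => hnf x (Finset.mem_univ x),
    fun u v huv hMuv => hstab u (Finset.mem_univ u) v (Finset.mem_univ v) huv hMuv⟩
end

section
/- For the Reingold-Tarjan line graph RT^k on 2^k points, the minimum-cost perfect matching M* (matching consecutive pairs x_{2i-1}, x_{2i}) has cost 2^{k-1}, and the matching M consisting of the edges (x_{2i}, x_{2i+1}) for 1 <= i < 2^{k-1} together with the edge (x_1, x_{2^k}) has cost 2*3^{k-1} - 2^{k-1}. Hence c(M)/c(M*) = (2*3^{k-1} - 2^{k-1}) / 2^{k-1} = 2*(3/2)^{k-1} - 1. -/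
/-- Positions of the points of the Reingold-Tarjan line graph `RT^{j+1}`
(on `2^(j+1)` points, indexed `0, …, 2^(j+1) - 1`): `RT^1` is two points at
distance `1`, and `RT^{j+2}` consists of two copies of `RT^{j+1}` with spacing
equal to the diameter of `RT^{j+1}`. -/
noncomputable def RTpt : ℕ → ℕ → ℝ
  | 0, i => if i = 0 then 0 else 1
  | j+1, i =>
      if i < 2^(j+1) then RTpt j i
      else RTpt j (i - 2^(j+1)) + 2 * RTpt j (2^(j+1) - 1)

lemma RTpt_succ_def (j i : ℕ) : RTpt (j+1) i =
    if i < 2^(j+1) then RTpt j i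
    else RTpt j (i - 2^(j+1)) + 2 * RTpt j (2^(j+1) - 1) := rfl

lemma RTpt_zero (j : ℕ) : RTpt j 0 = 0 := by
  induction j with
  | zero => simp [RTpt]
  | succ j ih =>
    rw [RTpt_succ_def, if_pos (by positivity)]
    exact ih

lemma RTpt_diam (j : ℕ) : RTpt j (2^(j+1) - 1) = 3^j := by
  induction j with
  | zero => simp [RTpt]
  | succ j ih =>
    have ha : (1:ℕ) ≤ 2^(j+1) := Nat.one_le_two_pow
    have hp : (2:ℕ)^(j+2) = 2^(j+1) * 2 := by rw [pow_succ]
    rw [RTpt_succ_def, if_neg (by omega)]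
    have e1 : 2^(j+2) - 1 - 2^(j+1) = 2^(j+1) - 1 := by omega
    rw [e1, ih]
    ring

lemma RTpt_A (j : ℕ) :
    (∑ i ∈ Finset.range (2^j), (RTpt j (2*i+1) - RTpt j (2*i))) = 2^j := by
  induction j with
  | zero => simp [RTpt]
  | succ j ih =>
    have ha : (1:ℕ) ≤ 2^j := Nat.one_le_two_pow
    have hp : (2:ℕ)^(j+1) = 2^j * 2 := by rw [pow_succ]
    have hsplit : (2:ℕ)^(j+1) = 2^j + 2^j := by omega
    rw [hsplit, Finset.sum_range_add]
    have h1 : ∀ i ∈ Finset.range (2^j),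
        RTpt (j+1) (2*i+1) - RTpt (j+1) (2*i)
          = RTpt j (2*i+1) - RTpt j (2*i) := by
      intro i hi
      simp only [Finset.mem_range] at hi
      have h2 : 2*i+1 < 2^(j+1) := by omega
      have h3 : 2*i < 2^(j+1) := by omega
      rw [RTpt_succ_def, if_pos h2, RTpt_succ_def, if_pos h3]
    have h2 : ∀ x ∈ Finset.range (2^j),
        RTpt (j+1) (2*(2^j + x)+1) - RTpt (j+1) (2*(2^j + x))
          = RTpt j (2*x+1) - RTpt j (2*x) := by
      intro x hx
      simp only [Finset.mem_range] at hx
      have h3 : ¬ (2*(2^j + x)+1 < 2^(j+1)) := by omega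
      have h4 : ¬ (2*(2^j + x) < 2^(j+1)) := by omega
      have e1 : 2*(2^j + x)+1 - 2^(j+1) = 2*x+1 := by omega
      have e2 : 2*(2^j + x) - 2^(j+1) = 2*x := by omega
      rw [RTpt_succ_def, if_neg h3, RTpt_succ_def, if_neg h4, e1, e2]
      ring
    rw [Finset.sum_congr rfl h1, Finset.sum_congr rfl h2, ih]
    ring

lemma tele (f : ℕ → ℝ) : ∀ n : ℕ,
    (∑ i ∈ Finset.range n, (f (2*i+2) - f (2*i+1)))
      + (∑ i ∈ Finset.range (n+1), (f (2*i+1) - f (2*i)))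
      = f (2*(n+1)-1) - f 0 := by
  intro n
  induction n with
  | zero => simp
  | succ n ih =>
    rw [Finset.sum_range_succ, Finset.sum_range_succ (f := fun i => f (2*i+1) - f (2*i))]
    have h1 : 2*(n+1)-1 = 2*n+1 := by omega
    have h2 : 2*(n+1+1)-1 = 2*n+2+1 := by omega
    have h3 : 2*(n+1) = 2*n+2 := by ring
    rw [h2]
    rw [h1] at ih
    rw [h3]
    linarith [ih]

/-- In `RT^k` (points `x_0 < x_1 < … < x_{2^k - 1}`, 0-indexed),
the minimum-cost perfect matching `M*` (matching consecutive pairs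
`(x_{2i}, x_{2i+1})`) has cost `2^(k-1)`; the matching `M` consisting of the
edges `(x_{2i+1}, x_{2i+2})` for `0 ≤ i < 2^(k-1) - 1` together with the edge
`(x_0, x_{2^k - 1})` has cost `2·3^(k-1) - 2^(k-1)`; hence
`c(M)/c(M*) = 2·(3/2)^(k-1) - 1`. -/
theorem stmt_5 (k : ℕ) (hk : 1 ≤ k) :
    (∑ i ∈ Finset.range (2^(k-1)),
        (RTpt (k-1) (2*i+1) - RTpt (k-1) (2*i))) = 2^(k-1) ∧
    ((∑ i ∈ Finset.range (2^(k-1) - 1),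
        (RTpt (k-1) (2*i+2) - RTpt (k-1) (2*i+1)))
      + (RTpt (k-1) (2^k - 1) - RTpt (k-1) 0))
      = 2 * 3^(k-1) - 2^(k-1) ∧
    ((∑ i ∈ Finset.range (2^(k-1) - 1),
        (RTpt (k-1) (2*i+2) - RTpt (k-1) (2*i+1)))
      + (RTpt (k-1) (2^k - 1) - RTpt (k-1) 0))
      / (∑ i ∈ Finset.range (2^(k-1)),
          (RTpt (k-1) (2*i+1) - RTpt (k-1) (2*i)))
      = 2 * (3/2 : ℝ)^(k-1) - 1 := by
  obtain ⟨j, rfl⟩ : ∃ j, k = j + 1 := ⟨k-1, (Nat.succ_pred_eq_of_pos hk).symm⟩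
  simp only [Nat.add_sub_cancel]
  have ha : (1:ℕ) ≤ 2^j := Nat.one_le_two_pow
  have hA := RTpt_A j
  have ht := tele (RTpt j) (2^j - 1)
  have e1 : 2^j - 1 + 1 = 2^j := by omega
  have e2 : 2*(2^j) - 1 = 2^(j+1) - 1 := by
    rw [pow_succ]; omega
  rw [e1] at ht
  rw [e2, RTpt_diam, RTpt_zero] at ht
  -- ht : Msum + A = 3^j - 0
  have hM : (∑ i ∈ Finset.range (2^j - 1),
      (RTpt j (2*i+2) - RTpt j (2*i+1)))
      + (RTpt j (2^(j+1) - 1) - RTpt j 0) = 2 * 3^j - 2^j := by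
    rw [RTpt_diam, RTpt_zero]
    linarith [ht, hA]
  refine ⟨hA, hM, ?_⟩
  rw [hM, hA]
  have h2 : ((2:ℝ)^j) ≠ 0 := by positivity
  rw [div_eq_iff h2, div_pow]
  field_simp
end

section
/- The price of anarchy of minimum-cost perfect matchings over metric graphs on 2n vertices is at least Omega(n^{log2(3/2)}): for every k >= 1 there is a metric graph on 2^k vertices with a stable perfect matching M and minimum-cost perfect matching M* with c(M)/c(M*) = 2*(3/2)^{k-1} - 1. -/
/-- edge weight contribution of bit `j` -/
noncomputable def rtc : ℕ → ℝ := fun j => if j = 0 then 1 else 2 * 3 ^ (j - 1)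

/-- position of vertex `x` in the Reingold–Tarjan line construction with `K` bits -/
noncomputable def rtp : ℕ → ℕ → ℝ
  | 0, _ => 0
  | (K+1), x => if x < 2^K then rtp K x else rtc K + rtp K (x - 2^K)

lemma rtp_succ (K x : ℕ) :
    rtp (K+1) x = if x < 2^K then rtp K x else rtc K + rtp K (x - 2^K) := rfl

lemma rtc_one_le (j : ℕ) : 1 ≤ rtc j := by
  unfold rtc
  split
  · norm_num
  · have h : (1:ℝ) ≤ 3 ^ (j-1) := one_le_pow₀ (by norm_num)
    nlinarith

lemma rtc_nonneg (j : ℕ) : 0 ≤ rtc j := le_trans zero_le_one (rtc_one_le j)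

lemma rtc_le (j : ℕ) : rtc j ≤ 3 ^ j := by
  unfold rtc
  split
  · rename_i h; subst h; norm_num
  · rename_i h
    have e : j = (j - 1) + 1 := by omega
    rw [e, pow_succ]
    have h3 : (0:ℝ) < 3 ^ (j-1) := by positivity
    simp only [Nat.add_sub_cancel]
    nlinarith

lemma rtc_ge (j : ℕ) : 3 ^ j + 1 ≤ 2 * rtc j := by
  unfold rtc
  split
  · rename_i h; subst h; norm_num
  · rename_i h
    have e : j = (j - 1) + 1 := by omega
    rw [e, pow_succ]
    have h3 : (1:ℝ) ≤ 3 ^ (j-1) := one_le_pow₀ (by norm_num)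
    simp only [Nat.add_sub_cancel]
    nlinarith

lemma rtp_zero (K : ℕ) : rtp K 0 = 0 := by
  induction K with
  | zero => rfl
  | succ K ih => rw [rtp_succ, if_pos (Nat.two_pow_pos K)]; exact ih

lemma rtp_nonneg (K x : ℕ) : 0 ≤ rtp K x := by
  induction K generalizing x with
  | zero => simp [rtp]
  | succ K ih =>
    rw [rtp_succ]
    split
    · exact ih x
    · exact add_nonneg (rtc_nonneg K) (ih _)

lemma rtp_up (K : ℕ) : ∀ x, x < 2^K → 2 * rtp K x + 1 ≤ 3 ^ K := by
  induction K with
  | zero => intro x hx; simp [rtp]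
  | succ K ih =>
    intro x hx
    rw [rtp_succ, pow_succ]
    split
    · rename_i h
      have := ih x h
      have h3 : (1:ℝ) ≤ 3 ^ K := one_le_pow₀ (by norm_num)
      nlinarith
    · rename_i h
      have hb : x - 2^K < 2^K := by omega
      have := ih (x - 2^K) hb
      have hc := rtc_le K
      nlinarith

lemma rtp_gap (K : ℕ) : ∀ x y, x < y → y < 2^K → rtp K x + 1 ≤ rtp K y := by
  induction K with
  | zero => intro x y hxy hy; omega
  | succ K ih =>
    intro x y hxy hy
    rw [rtp_succ K y, rtp_succ K x]
    by_cases hyl : y < 2^K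
    · rw [if_pos hyl, if_pos (by omega)]
      exact ih x y hxy hyl
    · rw [if_neg hyl]
      by_cases hxl : x < 2^K
      · rw [if_pos hxl]
        have h1 := rtp_up K x hxl
        have h2 := rtc_ge K
        have h3 := rtp_nonneg K (y - 2^K)
        nlinarith
      · rw [if_neg hxl]
        have := ih (x - 2^K) (y - 2^K) (by omega) (by omega)
        linarith

lemma rtp_mono (K : ℕ) {x y : ℕ} (h : x ≤ y) (hy : y < 2^K) : rtp K x ≤ rtp K y := by
  rcases Nat.eq_or_lt_of_le h with rfl | h'
  · exact le_refl _
  · linarith [rtp_gap K x y h' hy]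

lemma rtp_ne (K a b : ℕ) (hab : a ≠ b) (ha : a < 2^K) (hb : b < 2^K) :
    1 ≤ |rtp K a - rtp K b| := by
  rcases Nat.lt_or_ge a b with h | h
  · have := rtp_gap K a b h hb
    rw [abs_sub_comm]
    calc (1:ℝ) ≤ rtp K b - rtp K a := by linarith
    _ ≤ |rtp K b - rtp K a| := le_abs_self _
  · have h' : b < a := by omega
    have := rtp_gap K b a h' ha
    calc (1:ℝ) ≤ rtp K a - rtp K b := by linarith
    _ ≤ |rtp K a - rtp K b| := le_abs_self _
lemma rtp_low (t r : ℕ) (hr : r < 2^t) : ∀ K, t ≤ K → rtp K r = rtp t r := by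
  intro K
  induction K with
  | zero =>
    intro h
    have ht : t = 0 := by omega
    subst ht
    rfl
  | succ K ih =>
    intro h
    rcases Nat.eq_or_lt_of_le h with rfl | h'
    · rfl
    · have ht : t ≤ K := by omega
      have h2 : (2:ℕ)^t ≤ 2^K := Nat.pow_le_pow_right (by norm_num) ht
      rw [rtp_succ, if_pos (by omega)]
      exact ih ht

lemma rtp_add (t r : ℕ) (hr : r < 2^t) :
    ∀ K m, t ≤ K → 2^t ∣ m → m + r < 2^K → rtp K (m + r) = rtp K m + rtp K r := by
  intro K
  induction K with
  | zero => intro m ht hd hs; have : t = 0 := by omega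
            subst this
            have : r = 0 := by omega
            have : m = 0 := by omega
            simp_all [rtp_zero]
  | succ K ih =>
    intro m ht hd hs
    rcases Nat.eq_zero_or_pos m with rfl | hm
    · simp [rtp_zero]
    have htK : t ≤ K := by
      by_contra hc
      have he : t = K + 1 := by omega
      have h2 : 2^t ≤ m := Nat.le_of_dvd hm hd
      rw [he] at h2
      omega
    have h2tK : (2:ℕ)^t ≤ 2^K := Nat.pow_le_pow_right (by norm_num) htK
    by_cases hlow : m + r < 2^K
    · rw [rtp_succ, if_pos hlow, rtp_succ, if_pos (by omega), rtp_succ, if_pos (by omega)]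
      exact ih m htK hd hlow
    · -- m ≥ 2^K
      have hmK : 2^K ≤ m := by
        by_contra hc
        push_neg at hc
        have hdd : 2^t ∣ 2^K - m := Nat.dvd_sub (pow_dvd_pow 2 htK) hd
        have : 2^t ≤ 2^K - m := Nat.le_of_dvd (by omega) hdd
        omega
      rw [rtp_succ, if_neg (by omega), rtp_succ, if_neg (by omega), rtp_succ,
        if_pos (by omega : r < 2^K)]
      have e : m + r - 2^K = (m - 2^K) + r := by omega
      rw [e, ih (m - 2^K) htK (Nat.dvd_sub hd (pow_dvd_pow 2 htK)) (by omega)]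
      ring

lemma rtp_one (K : ℕ) (hK : 1 ≤ K) : rtp K 1 = 1 := by
  rw [rtp_low 1 1 (by norm_num) K hK]
  norm_num [rtp, rtc, rtp_zero]

lemma rtp_unit (K x : ℕ) (hx : 2 ∣ x) (hxK : x + 1 < 2^K) :
    rtp K (x + 1) = rtp K x + 1 := by
  have hK : 1 ≤ K := by
    rcases Nat.eq_zero_or_pos K with rfl | h
    · norm_num at hxK
    · exact h
  rw [rtp_add 1 1 (by norm_num) K x hK (by simpa using hx) hxK, rtp_one K hK]

lemma rtp_pow2 (K t : ℕ) (h : t < K) : rtp K (2^t) = rtc t := by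
  rw [rtp_low (t+1) (2^t) (by have := Nat.two_pow_pos t; omega) K (by omega)]
  rw [rtp_succ, if_neg (by omega), Nat.sub_self, rtp_zero]
  ring

lemma rtp_ones (t : ℕ) : ∀ K, 1 ≤ t → t ≤ K → rtp K (2^t - 1) = 3 ^ (t-1) := by
  induction t with
  | zero => omega
  | succ t ih =>
    intro K h1 hK
    by_cases ht : t = 0
    · subst ht
      simpa using rtp_one K hK
    · have h1t : 1 ≤ t := by omega
      have hp : (1:ℕ) ≤ 2^t := Nat.two_pow_pos t
      have hpk : (2:ℕ)^(t+1) ≤ 2^K := Nat.pow_le_pow_right (by norm_num) hK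
      have e : 2^(t+1) - 1 = 2^t + (2^t - 1) := by
        have : (2:ℕ)^(t+1) = 2^t + 2^t := by rw [pow_succ]; ring
        omega
      rw [e, rtp_add t (2^t - 1) (by omega) K (2^t) (by omega) dvd_rfl (by omega)]
      rw [rtp_pow2 K t (by omega), ih K h1t (by omega)]
      have et : t = (t - 1) + 1 := by omega
      rw [show t + 1 - 1 = (t-1) + 1 by omega, pow_succ]
      unfold rtc
      rw [if_neg ht]
      ring

lemma rtp_pair (K t a : ℕ) (h1 : 1 ≤ t) (htK : t < K) (hd : 2^t ∣ a)
    (hnd : ¬ (2^(t+1) ∣ a)) (ha : a < 2^K) :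
    rtp K a = rtp K (a - 1) + 3 ^ (t - 1) := by
  obtain ⟨c, rfl⟩ := hd
  have hc0 : c ≠ 0 := by rintro rfl; simp at hnd
  have hcodd : c % 2 = 1 := by
    rcases Nat.even_or_odd c with he | ho
    · exfalso
      obtain ⟨e, rfl⟩ := he
      exact hnd ⟨e, by ring⟩
    · exact Nat.odd_iff.mp ho
  have hb : 2^(t+1) ∣ 2^t * (c - 1) := by
    obtain ⟨e, he⟩ : 2 ∣ (c - 1) := by omega
    exact ⟨e, by rw [he, pow_succ]; ring⟩
  have hp : (1:ℕ) ≤ 2^t := Nat.two_pow_pos t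
  have hp1 : (2:ℕ)^(t+1) = 2^t + 2^t := by rw [pow_succ]; ring
  have e1 : 2^t * c = 2^t * (c - 1) + 2^t := by
    have : c = (c - 1) + 1 := by omega
    nlinarith [this]
  have e2 : 2^t * (c - 1) + 2^t - 1 = 2^t * (c - 1) + (2^t - 1) := by omega
  rw [e1, e2]
  rw [rtp_add (t+1) (2^t) (by omega) K (2^t * (c-1)) (by omega) hb (by omega)]
  rw [rtp_add (t+1) (2^t - 1) (by omega) K (2^t * (c-1)) (by omega) hb (by omega)]
  rw [rtp_pow2 K t htK, rtp_ones t K h1 (by omega)]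
  unfold rtc
  rw [if_neg (by omega)]
  ring
/-- the expensive stable matching: 0 ↔ n-1, and (2i-1) ↔ 2i in between -/
def bigN (n x : ℕ) : ℕ :=
  if x = 0 then n - 1 else if x = n - 1 then 0 else if x % 2 = 1 then x + 1 else x - 1

/-- the optimal matching: 2i ↔ 2i+1 -/
def pairN (x : ℕ) : ℕ := if x % 2 = 0 then x + 1 else x - 1

lemma bigN_lt (n x : ℕ) (hn : 2 ≤ n) (hne : n % 2 = 0) (hx : x < n) : bigN n x < n := by
  unfold bigN; split_ifs <;> (try contradiction) <;> omega

lemma bigN_invol (n x : ℕ) (hn : 2 ≤ n) (hne : n % 2 = 0) (hx : x < n) :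
    bigN n (bigN n x) = x := by
  unfold bigN; split_ifs <;> (try contradiction) <;> omega

lemma bigN_ne (n x : ℕ) (hn : 2 ≤ n) (hne : n % 2 = 0) (hx : x < n) : bigN n x ≠ x := by
  unfold bigN; split_ifs <;> (try contradiction) <;> omega

lemma pairN_lt (n x : ℕ) (hne : n % 2 = 0) (hx : x < n) : pairN x < n := by
  unfold pairN; split_ifs <;> (try contradiction) <;> omega

lemma pairN_invol (x : ℕ) : pairN (pairN x) = x := by
  unfold pairN; split_ifs <;> (try contradiction) <;> omega

lemma pairN_ne (x : ℕ) : pairN x ≠ x := by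
  unfold pairN; split_ifs <;> (try contradiction) <;> omega

lemma two_le_two_pow (k : ℕ) (hk : 1 ≤ k) : 2 ≤ 2^k := by
  calc 2 = 2^1 := (pow_one 2).symm
  _ ≤ 2^k := Nat.pow_le_pow_right (by norm_num) hk

lemma two_pow_mod_two (k : ℕ) (hk : 1 ≤ k) : 2^k % 2 = 0 := by
  have := dvd_pow_self 2 (show k ≠ 0 by omega)
  omega

/-- value of the top matched edge -/
lemma rtp_top (k : ℕ) (hk : 1 ≤ k) :
    |rtp k 0 - rtp k (2^k - 1)| = 3^(k-1) := by
  rw [rtp_zero, rtp_ones k k hk le_rfl, zero_sub, abs_neg, abs_of_nonneg (by positivity)]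

/-- each vertex has an "anchor" `a` and a "level" `t` describing its matched edge -/
lemma key (k x : ℕ) (hk : 1 ≤ k) (hx : x < 2^k) :
    ∃ a t, 1 ≤ t ∧ t ≤ k ∧ 2^t ∣ a ∧ a - 1 ≤ x ∧ x ≤ a ∧
      |rtp k x - rtp k (bigN (2^k) x)| = 3^(t-1) ∧
      (∀ y, y < 2^k → y ≠ x → bigN (2^k) x ≠ y → ¬(a - 1 ≤ y ∧ y ≤ a)) := by
  have hn2 : 2 ≤ 2^k := two_le_two_pow k hk
  have hnev : 2^k % 2 = 0 := two_pow_mod_two k hk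
  by_cases h0 : x = 0
  · subst h0
    have hb : bigN (2^k) 0 = 2^k - 1 := by unfold bigN; rw [if_pos rfl]
    refine ⟨0, k, hk, le_rfl, dvd_zero _, by omega, by omega, ?_, ?_⟩
    · rw [hb]; exact rtp_top k hk
    · intro y hy hyx hby hmem
      omega
  by_cases hl : x = 2^k - 1
  · subst hl
    have hb : bigN (2^k) (2^k - 1) = 0 := by
      unfold bigN; rw [if_neg (by omega), if_pos rfl]
    refine ⟨2^k, k, hk, le_rfl, dvd_rfl, by omega, by omega, ?_, ?_⟩
    · rw [hb, abs_sub_comm]; exact rtp_top k hk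
    · intro y hy hyx hby hmem
      omega
  -- middle vertices
  by_cases hodd : x % 2 = 1
  · -- x odd, matched upward to x+1
    have hb : bigN (2^k) x = x + 1 := by
      unfold bigN; rw [if_neg h0, if_neg hl, if_pos hodd]
    have hxk : x + 1 < 2^k := by omega
    set t := (x+1).factorization 2 with ht
    have hdvd2 : 2 ∣ x + 1 := by omega
    have hpos : 0 < t := Nat.Prime.factorization_pos_of_dvd Nat.prime_two (by omega) hdvd2
    have hdvd : 2^t ∣ x + 1 := Nat.ordProj_dvd (x+1) 2
    have hnd : ¬ (2^(t+1) ∣ x + 1) :=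
      Nat.pow_succ_factorization_not_dvd (by omega) Nat.prime_two
    have hle : 2^t ≤ x + 1 := Nat.le_of_dvd (by omega) hdvd
    have htk : t < k := by
      have : (2:ℕ)^t < 2^k := by omega
      exact (Nat.pow_lt_pow_iff_right (by norm_num)).mp this
    have hgap := rtp_pair k t (x+1) hpos htk hdvd hnd hxk
    rw [Nat.add_sub_cancel] at hgap
    refine ⟨x + 1, t, hpos, by omega, hdvd, by omega, by omega, ?_, ?_⟩
    · rw [hb, hgap, abs_sub_comm]
      rw [show rtp k x + 3^(t-1) - rtp k x = 3^(t-1) by ring]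
      exact abs_of_nonneg (by positivity)
    · intro y hy hyx hby hmem
      have : y = x + 1 := by omega
      rw [hb] at hby
      exact hby this.symm
  · -- x even middle, matched downward to x-1
    have hb : bigN (2^k) x = x - 1 := by
      unfold bigN; rw [if_neg h0, if_neg hl, if_neg hodd]
    set t := x.factorization 2 with ht
    have hdvd2 : 2 ∣ x := by omega
    have hpos : 0 < t := Nat.Prime.factorization_pos_of_dvd Nat.prime_two (by omega) hdvd2
    have hdvd : 2^t ∣ x := Nat.ordProj_dvd x 2
    have hnd : ¬ (2^(t+1) ∣ x) :=
      Nat.pow_succ_factorization_not_dvd (by omega) Nat.prime_two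
    have hle : 2^t ≤ x := Nat.le_of_dvd (by omega) hdvd
    have htk : t < k := by
      have : (2:ℕ)^t < 2^k := by omega
      exact (Nat.pow_lt_pow_iff_right (by norm_num)).mp this
    have hgap := rtp_pair k t x hpos htk hdvd hnd hx
    refine ⟨x, t, hpos, by omega, hdvd, by omega, by omega, ?_, ?_⟩
    · rw [hb, hgap]
      rw [show rtp k (x-1) + 3^(t-1) - rtp k (x-1) = 3^(t-1) by ring]
      exact abs_of_nonneg (by positivity)
    · intro y hy hyx hby hmem
      have : y = x - 1 := by omega
      rw [hb] at hby
      exact hby this.symm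
/-- stability at the level of natural-number vertices -/
lemma stabN (k u v : ℕ) (hk : 1 ≤ k) (hu : u < 2^k) (hv : v < 2^k) (huv : u < v)
    (h1 : bigN (2^k) u ≠ v) :
    min (|rtp k u - rtp k (bigN (2^k) u)|) (|rtp k v - rtp k (bigN (2^k) v)|)
      ≤ |rtp k u - rtp k v| := by
  obtain ⟨a, ta, hta1, htak, hda, hau1, hau2, hwa, hlasta⟩ := key k u hk hu
  obtain ⟨b, tb, htb1, htbk, hdb, hbv1, hbv2, hwb, _⟩ := key k v hk hv
  -- distinct anchors
  have hab : a ≠ b := by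
    rintro rfl
    exact hlasta v hv (by omega) h1 ⟨hbv1, hbv2⟩
  have htmin : 1 ≤ min ta tb := le_min hta1 htb1
  have h2t : 2 ≤ 2 ^ (min ta tb) := two_le_two_pow _ htmin
  have hdat : 2 ^ (min ta tb) ∣ a := dvd_trans (pow_dvd_pow 2 (min_le_left ta tb)) hda
  have hdbt : 2 ^ (min ta tb) ∣ b := dvd_trans (pow_dvd_pow 2 (min_le_right ta tb)) hdb
  have halb : a < b := by
    rcases lt_trichotomy a b with h | h | h
    · exact h
    · exact absurd h hab
    · exfalso
      have : 2 ^ (min ta tb) ≤ a - b := Nat.le_of_dvd (by omega) (Nat.dvd_sub hdat hdbt)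
      omega
  -- the key inequality
  have hab2 : a + 2 ^ (min ta tb) ≤ b := by
    have : 2 ^ (min ta tb) ≤ b - a := Nat.le_of_dvd (by omega) (Nat.dvd_sub hdbt hdat)
    omega
  have hak : a + (2 ^ (min ta tb) - 1) < 2^k := by omega
  have e1 : rtp k (a + (2 ^ (min ta tb) - 1)) = rtp k a + rtp k (2 ^ (min ta tb) - 1) :=
    rtp_add (min ta tb) _ (by omega) k a (le_trans (min_le_left ta tb) htak) hdat hak
  have e2 : rtp k (2 ^ (min ta tb) - 1) = 3 ^ (min ta tb - 1) :=
    rtp_ones (min ta tb) k htmin (le_trans (min_le_left ta tb) htak)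
  have m1 : rtp k u ≤ rtp k a := rtp_mono k hau2 (by omega)
  have m2 : rtp k (a + (2 ^ (min ta tb) - 1)) ≤ rtp k v := rtp_mono k (by omega) hv
  have hkey : (3:ℝ) ^ (min ta tb - 1) ≤ rtp k v - rtp k u := by
    rw [e2] at e1; linarith
  have hpos : (0:ℝ) < 3 ^ (min ta tb - 1) := by positivity
  have habs : |rtp k u - rtp k v| = rtp k v - rtp k u := by
    rw [abs_sub_comm]; exact abs_of_nonneg (by linarith)
  rw [hwa, hwb, habs]
  rcases min_cases ta tb with ⟨he, _⟩ | ⟨he, _⟩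
  · refine le_trans (min_le_left _ _) ?_
    rw [← he]; exact hkey
  · refine le_trans (min_le_right _ _) ?_
    rw [← he]; exact hkey
lemma costM_mid (k : ℕ) (hk : 1 ≤ k) : ∀ j, 2*j + 2 ≤ 2^k →
    (∑ i ∈ Finset.range (2*j), |rtp k (i+1) - rtp k (bigN (2^k) (i+1))|)
      = 2 * rtp k (2*j) - 2*(j:ℝ) := by
  intro j
  induction j with
  | zero => intro _; simp [rtp_zero]
  | succ j ih =>
    intro hj
    have hj' : 2*j + 2 ≤ 2^k := by omega
    have hnev := two_pow_mod_two k hk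
    have hn2 := two_le_two_pow k hk
    have e : 2*(j+1) = (2*j + 1) + 1 := by ring
    rw [e, Finset.sum_range_succ, Finset.sum_range_succ, ih hj']
    simp only [show 2*j+1+1 = 2*j+2 from by omega]
    have hb1 : bigN (2^k) (2*j+1) = 2*j + 2 := by
      unfold bigN
      rw [if_neg (by omega), if_neg (by omega), if_pos (by omega)]
    have hb2 : bigN (2^k) (2*j+2) = 2*j + 1 := by
      unfold bigN
      rw [if_neg (by omega), if_neg (by omega), if_neg (by omega)]
      omega
    rw [hb1, hb2]
    have hle : rtp k (2*j+1) ≤ rtp k (2*j+2) := rtp_mono k (by omega) (by omega)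
    rw [abs_sub_comm (rtp k (2*j+1)) (rtp k (2*j+2)),
      abs_of_nonneg (sub_nonneg.mpr hle)]
    have hu : rtp k (2*j+1) = rtp k (2*j) + 1 := rtp_unit k (2*j) ⟨j, rfl⟩ (by omega)
    rw [hu]
    push_cast
    ring

lemma costM (k : ℕ) (hk : 1 ≤ k) :
    (∑ i ∈ Finset.range (2^k), |rtp k i - rtp k (bigN (2^k) i)|)
      = 4 * 3^(k-1) - 2*2^(k-1) := by
  have hn2 := two_le_two_pow k hk
  have hnev := two_pow_mod_two k hk
  have hpk : (1:ℕ) ≤ 2^(k-1) := Nat.one_le_two_pow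
  have h2k : (2:ℕ)^k = 2 * 2^(k-1) := by
    conv_lhs => rw [show k = (k-1)+1 from by omega]
    rw [pow_succ]; ring
  have hsplit : (2:ℕ)^k = 2*(2^(k-1) - 1) + 1 + 1 := by omega
  rw [show Finset.range (2^k) = Finset.range (2*(2^(k-1) - 1) + 1 + 1) from
    congrArg _ hsplit, Finset.sum_range_succ, Finset.sum_range_succ']
  rw [costM_mid k hk (2^(k-1) - 1) (by omega)]
  have hb0 : bigN (2^k) 0 = 2^k - 1 := by unfold bigN; rw [if_pos rfl]
  rw [hb0, rtp_top k hk]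
  have eX : 2*(2^(k-1)-1)+1 = 2^k - 1 := by omega
  have eY : 2*(2^(k-1)-1) = 2^k - 2 := by omega
  rw [eX, eY]
  have hbL : bigN (2^k) (2^k - 1) = 0 := by
    unfold bigN; rw [if_neg (by omega), if_pos rfl]
  rw [hbL, abs_sub_comm (rtp k (2^k - 1)) (rtp k 0), rtp_top k hk]
  have hL : rtp k (2^k - 1) = 3^(k-1) := rtp_ones k k hk le_rfl
  have hL1 : rtp k (2^k - 1) = rtp k (2^k - 2) + 1 := by
    have h2 := rtp_unit k (2^k - 2) (by omega) (by omega)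
    rw [show 2^k - 2 + 1 = 2^k - 1 from by omega] at h2
    exact h2
  rw [Nat.cast_sub hpk]
  push_cast
  linarith

lemma wPair (k x : ℕ) (hk : 1 ≤ k) (hx : x < 2^k) : |rtp k x - rtp k (pairN x)| = 1 := by
  have hnev := two_pow_mod_two k hk
  by_cases h : x % 2 = 0
  · have hp : pairN x = x + 1 := by unfold pairN; rw [if_pos h]
    have hu : rtp k (x+1) = rtp k x + 1 := rtp_unit k x (by omega) (by omega)
    rw [hp, hu, show rtp k x - (rtp k x + 1) = -1 from by ring, abs_neg, abs_one]
  · have hp : pairN x = x - 1 := by unfold pairN; rw [if_neg h]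
    have hu : rtp k x = rtp k (x - 1) + 1 := by
      have h2 := rtp_unit k (x-1) (by omega) (by omega)
      rw [show x - 1 + 1 = x from by omega] at h2
      exact h2
    rw [hp, hu, show rtp k (x-1) + 1 - rtp k (x-1) = 1 from by ring, abs_one]
/-- PoA lower bound. For every `k ≥ 1` there is a metric graph on
`2^k` vertices with a stable perfect matching `M` and a minimum-cost perfect
matching `M*` such that `c(M)/c(M*) = 2·(3/2)^(k-1) - 1`. Matchings are
fixed-point-free involutions on `Fin (2^k)`; costs `∑ x, w x (M x)` count
every edge twice, so the ratio is unaffected. -/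
theorem stmt_7 (k : ℕ) (hk : 1 ≤ k) :
    ∃ w : Fin (2^k) → Fin (2^k) → ℝ,
      (∀ u v, w u v = w v u) ∧
      (∀ u v, u ≠ v → 0 < w u v) ∧
      (∀ u v x, u ≠ v → v ≠ x → u ≠ x → w u x ≤ w u v + w v x) ∧
      ∃ M Mstar : Fin (2^k) → Fin (2^k),
        Function.Involutive M ∧ (∀ x, M x ≠ x) ∧
        Function.Involutive Mstar ∧ (∀ x, Mstar x ≠ x) ∧
        -- M is stable
        (∀ u v : Fin (2^k), u ≠ v → M u ≠ v →
          ¬ (w u v < min (w u (M u)) (w v (M v)))) ∧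
        -- Mstar is a minimum-cost perfect matching
        (∀ M' : Fin (2^k) → Fin (2^k), Function.Involutive M' →
          (∀ x, M' x ≠ x) → (∑ x, w x (Mstar x)) ≤ ∑ x, w x (M' x)) ∧
        (∑ x, w x (M x)) / (∑ x, w x (Mstar x))
          = 2 * (3/2 : ℝ)^(k-1) - 1 := by
  have hn2 : 2 ≤ 2^k := two_le_two_pow k hk
  have hnev : 2^k % 2 = 0 := two_pow_mod_two k hk
  refine ⟨fun u v => |rtp k u.val - rtp k v.val|, fun u v => abs_sub_comm _ _, ?_, ?_, ?_⟩
  · intro u v huv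
    have hne : u.val ≠ v.val := fun h => huv (Fin.ext h)
    have h1 := rtp_ne k u.val v.val hne u.isLt v.isLt
    linarith
  · intro u v x _ _ _
    exact abs_sub_le _ _ _
  refine ⟨fun x => ⟨bigN (2^k) x.val, bigN_lt _ _ hn2 hnev x.isLt⟩,
          fun x => ⟨pairN x.val, pairN_lt _ _ hnev x.isLt⟩, ?_, ?_, ?_, ?_, ?_, ?_, ?_⟩
  · intro x; exact Fin.ext (bigN_invol _ _ hn2 hnev x.isLt)
  · intro x; exact fun h => bigN_ne _ _ hn2 hnev x.isLt (congrArg Fin.val h)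
  · intro x; exact Fin.ext (pairN_invol _)
  · intro x; exact fun h => pairN_ne _ (congrArg Fin.val h)
  · -- stability
    intro u v huv hMuv
    rw [not_lt]
    show min (|rtp k u.val - rtp k (bigN (2^k) u.val)|)
        (|rtp k v.val - rtp k (bigN (2^k) v.val)|) ≤ |rtp k u.val - rtp k v.val|
    have hvne : u.val ≠ v.val := fun h => huv (Fin.ext h)
    have hMuv' : bigN (2^k) u.val ≠ v.val := fun h => hMuv (Fin.ext h)
    rcases Nat.lt_or_ge u.val v.val with h | h
    · exact stabN k u.val v.val hk u.isLt v.isLt h hMuv'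
    · have h' : v.val < u.val := by omega
      have hMvu' : bigN (2^k) v.val ≠ u.val := by
        intro he
        apply hMuv'
        have h2 := bigN_invol (2^k) v.val hn2 hnev v.isLt
        rw [he] at h2
        exact h2
      rw [min_comm, abs_sub_comm (rtp k u.val) (rtp k v.val)]
      exact stabN k v.val u.val hk v.isLt u.isLt h' hMvu'
  · -- min-cost
    intro M' hinv hfpf
    have hstar : (∑ x : Fin (2^k), |rtp k x.val - rtp k (pairN x.val)|) = (2^k : ℝ) := by
      rw [Finset.sum_congr rfl (fun x _ => wPair k x.val hk x.isLt), Finset.sum_const,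
        Finset.card_univ, Fintype.card_fin]
      simp
    show (∑ x : Fin (2^k), |rtp k x.val - rtp k (pairN x.val)|)
        ≤ ∑ x : Fin (2^k), |rtp k x.val - rtp k ((M' x).val)|
    rw [hstar]
    have hterm : ∀ x : Fin (2^k), (1:ℝ) ≤ |rtp k x.val - rtp k ((M' x).val)| := by
      intro x
      exact rtp_ne k x.val (M' x).val (fun h => hfpf x (Fin.ext h).symm) x.isLt (M' x).isLt
    calc ((2:ℝ)^k) = ∑ _x : Fin (2^k), (1:ℝ) := by
          rw [Finset.sum_const, Finset.card_univ, Fintype.card_fin]; simp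
    _ ≤ ∑ x : Fin (2^k), |rtp k x.val - rtp k ((M' x).val)| :=
          Finset.sum_le_sum (fun x _ => hterm x)
  · -- the ratio
    have hstar : (∑ x : Fin (2^k), |rtp k x.val - rtp k (pairN x.val)|) = (2^k : ℝ) := by
      rw [Finset.sum_congr rfl (fun x _ => wPair k x.val hk x.isLt), Finset.sum_const,
        Finset.card_univ, Fintype.card_fin]
      simp
    have hM : (∑ x : Fin (2^k), |rtp k x.val - rtp k (bigN (2^k) x.val)|)
        = 4 * 3^(k-1) - 2*2^(k-1) := by
      rw [Fin.sum_univ_eq_sum_range (fun i => |rtp k i - rtp k (bigN (2^k) i)|) (2^k)]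
      exact costM k hk
    show (∑ x : Fin (2^k), |rtp k x.val - rtp k (bigN (2^k) x.val)|)
        / (∑ x : Fin (2^k), |rtp k x.val - rtp k (pairN x.val)|) = 2 * (3/2 : ℝ)^(k-1) - 1
    rw [hstar, hM]
    have h2k : (2:ℝ)^k = 2 * 2^(k-1) := by
      conv_lhs => rw [show k = (k-1)+1 from by omega]
      rw [pow_succ]; ring
    have hne : ((2:ℝ))^(k-1) ≠ 0 := by positivity
    rw [h2k, div_eq_iff (by positivity), div_pow]
    field_simp
    ring
end

section
/- Among all weighted line matching configurations on 2^k vertices (line graphs with the consecutive-pairs minimum matching M* and the 'shifted' stable matching M), the Reingold-Tarjan configuration RT^k maximizes the ratio c(M)/c(M*); i.e., for every weighted line graph G on 2^k points for which the shifted matching M(G) is stable, c(M(G))/c(M*(G)) <= 2*(3/2)^{k-1} - 1. -/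
/-- The "shifted" matching on `m` points (0-indexed): point `0` is matched to
point `m - 1`, and otherwise odd points `i` are matched to `i + 1` and even
points `i` to `i - 1`. -/
def Mshift (m i : ℕ) : ℕ :=
  if i = 0 then m - 1
  else if i = m - 1 then 0
  else if i % 2 = 1 then i + 1 else i - 1


noncomputable def cexp : ℝ := Real.logb 2 (3/2)

lemma cexp_nonneg : 0 ≤ cexp := Real.logb_nonneg one_lt_two (by norm_num)

lemma two_rpow_cexp : (2:ℝ) ^ cexp = 3/2 :=
  Real.rpow_logb two_pos (by norm_num) (by norm_num)

lemma key_ineq (l r : ℝ) (hl : 0 < l) (hr : 0 < r) :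
    3 * (l ^ cexp * r ^ cexp) ≤ (l + r) ^ cexp * (l ^ cexp + r ^ cexp) := by
  set c := cexp with hc
  have hc2 : 0 ≤ c / 2 := by have := cexp_nonneg; linarith
  set p := l ^ (c/2) with hp
  set q := r ^ (c/2) with hq
  have hp0 : 0 ≤ p := (Real.rpow_pos_of_pos hl _).le
  have hq0 : 0 ≤ q := (Real.rpow_pos_of_pos hr _).le
  have hpl : p * p = l ^ c := by
    rw [hp, ← Real.rpow_add hl]; ring_nf
  have hql : q * q = r ^ c := by
    rw [hq, ← Real.rpow_add hr]; ring_nf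
  have hpq : p * q = (l*r) ^ (c/2) := (Real.mul_rpow hl.le hr.le).symm
  have hlr : l * r ≤ ((l+r)/2)^(2:ℕ) := by nlinarith [sq_nonneg (l - r)]
  have h1 : (l*r) ^ (c/2) ≤ (((l+r)/2)^(2:ℕ)) ^ (c/2) :=
    Real.rpow_le_rpow (by positivity) hlr hc2
  have h2 : (((l+r)/2)^(2:ℕ)) ^ (c/2) = ((l+r)/2) ^ c := by
    rw [← Real.rpow_natCast ((l+r)/2) 2, ← Real.rpow_mul (by positivity)]
    congr 1; ring
  have h3 : ((l+r)/2) ^ c = (l+r) ^ c * (2/3) := by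
    rw [Real.div_rpow (by positivity) (by norm_num), hc, two_rpow_cexp]
    ring
  -- so p*q ≤ (2/3) * (l+r)^c
  have h4 : p * q ≤ (l+r) ^ c * (2/3) := by
    rw [hpq]; calc (l*r) ^ (c/2) ≤ _ := h1
      _ = _ := by rw [h2, h3]
  have hM0 : 0 ≤ (l+r) ^ c := (Real.rpow_pos_of_pos (by linarith) _).le
  -- 3 p² q² ≤ M (p² + q²)   since  p²+q² ≥ 2pq  and  3pq ≤ 2M
  nlinarith [sq_nonneg (p - q), mul_nonneg hp0 hq0, sq_nonneg (p*q)]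

lemma telescope (x : ℕ → ℝ) (s t : ℕ) (h : s ≤ t) :
    ((Finset.Ico s (t+1)).sum (fun i => x (2*i+1) - x (2*i)))
      + ((Finset.Ico s t).sum (fun i => x (2*i+2) - x (2*i+1)))
      = x (2*t+1) - x (2*s) := by
  induction t, h using Nat.le_induction with
  | base => simp
  | succ t ht ih =>
      rw [Finset.sum_Ico_succ_top (show s ≤ t+1 by omega) (fun i => x (2*i+1) - x (2*i)),
        Finset.sum_Ico_succ_top (show s ≤ t by omega) (fun i => x (2*i+2) - x (2*i+1))]
      simp only [show 2*(t+1)+1 = 2*t+3 from by ring, show 2*(t+1) = 2*t+2 from by ring]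
      linarith [ih]

set_option maxHeartbeats 1000000 in
lemma main_lemma (x : ℕ → ℝ) (N : ℕ) : ∀ lo hi : ℕ, hi - lo = N → lo < hi →
    (∀ i, lo ≤ i → i < hi → 0 ≤ x (2*i+1) - x (2*i)) →
    (∀ j, lo ≤ j → j < hi - 1 → x (2*j+2) - x (2*j+1) ≤ x (2*j+1) - x (2*lo)) →
    (∀ j, lo ≤ j → j < hi - 1 → x (2*j+2) - x (2*j+1) ≤ x (2*hi-1) - x (2*j+2)) →
    (∀ i j, lo ≤ i → i < j → j < hi - 1 →
      min (x (2*i+2) - x (2*i+1)) (x (2*j+2) - x (2*j+1)) ≤ x (2*j+1) - x (2*i+2)) →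
    (Finset.Ico lo (hi-1)).sum (fun i => x (2*i+2) - x (2*i+1)) ≤
      (((hi - lo : ℕ):ℝ) ^ cexp - 1) * (Finset.Ico lo hi).sum (fun i => x (2*i+1) - x (2*i)) := by
  induction N using Nat.strong_induction_on with
  | _ N IH =>
    intro lo hi hN hlt ha hpre hsuf hB
    by_cases hbase : hi = lo + 1
    · subst hbase
      simp [Real.one_rpow, show lo + 1 - 1 = lo from rfl, Nat.add_sub_cancel_left]
    · have h2 : lo + 2 ≤ hi := by omega
      obtain ⟨p, hpmem, hpmax⟩ := Finset.exists_max_image (Finset.Ico lo (hi-1))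
        (fun i => x (2*i+2) - x (2*i+1)) ⟨lo, by simp [Finset.mem_Ico]; omega⟩
      rw [Finset.mem_Ico] at hpmem
      obtain ⟨hplo, hphi⟩ := hpmem
      -- left half
      have hL := IH (p+1-lo) (by omega) lo (p+1) rfl (by omega)
        (fun i h1 h2 => ha i h1 (by omega))
        (fun j h1 h2 => hpre j h1 (by omega))
        (fun j h1 hj => by
          have hb := hB j p h1 (by omega) hphi
          have hle : (fun i => x (2*i+2) - x (2*i+1)) j ≤ (fun i => x (2*i+2) - x (2*i+1)) p :=
            hpmax j (by rw [Finset.mem_Ico]; omega)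
          simp only at hle
          rw [min_eq_left hle] at hb
          have : 2*(p+1)-1 = 2*p+1 := by omega
          rw [this]
          exact hb)
        (fun i j h1 h2 h3 => hB i j h1 h2 (by omega))
      have hR := IH (hi-(p+1)) (by omega) (p+1) hi rfl (by omega)
        (fun i h1 h2 => ha i (by omega) h2)
        (fun j h1 hj => by
          have hb := hB p j hplo (by omega) (by omega)
          have hle : (fun i => x (2*i+2) - x (2*i+1)) j ≤ (fun i => x (2*i+2) - x (2*i+1)) p :=
            hpmax j (by rw [Finset.mem_Ico]; omega)
          simp only at hle
          rw [min_eq_right hle] at hb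
          have : 2*(p+1) = 2*p+2 := by ring
          rw [this]
          exact hb)
        (fun j h1 h2 => hsuf j (by omega) h2)
        (fun i j h1 h2 h3 => hB i j (by omega) h2 h3)
      simp only [show p+1-1 = p from rfl] at hL
      -- telescopes
      have T1 := telescope x lo p hplo
      have T2 := telescope x (p+1) (hi-1) (by omega)
      rw [show hi-1+1 = hi from by omega, show 2*(hi-1)+1 = 2*hi-1 from by omega,
        show 2*(p+1) = 2*p+2 from by ring] at T2
      -- abbreviations
      set Gl := (Finset.Ico lo p).sum (fun i => x (2*i+2) - x (2*i+1)) with hGL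
      set Gr := (Finset.Ico (p+1) (hi-1)).sum (fun i => x (2*i+2) - x (2*i+1)) with hGR
      set Al := (Finset.Ico lo (p+1)).sum (fun i => x (2*i+1) - x (2*i)) with hAL
      set Ar := (Finset.Ico (p+1) hi).sum (fun i => x (2*i+1) - x (2*i)) with hAR
      have hAL0 : 0 ≤ Al := Finset.sum_nonneg (fun i hi' => by
        rw [Finset.mem_Ico] at hi'; exact ha i hi'.1 (by omega))
      have hAR0 : 0 ≤ Ar := Finset.sum_nonneg (fun i hi' => by
        rw [Finset.mem_Ico] at hi'; exact ha i (by omega) hi'.2)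
      -- sum splits
      have Sg : (Finset.Ico lo (hi-1)).sum (fun i => x (2*i+2) - x (2*i+1))
          = Gl + (x (2*p+2) - x (2*p+1)) + Gr := by
        rw [hGL, hGR, ← Finset.sum_Ico_consecutive (fun i => x (2*i+2) - x (2*i+1))
          (show lo ≤ p+1 by omega) (show p+1 ≤ hi-1 by omega),
          Finset.sum_Ico_succ_top hplo]
      have Sa : (Finset.Ico lo hi).sum (fun i => x (2*i+1) - x (2*i)) = Al + Ar :=
        (Finset.sum_Ico_consecutive _ (show lo ≤ p+1 by omega) (show p+1 ≤ hi by omega)).symm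
      -- numbers
      set P := ((p+1-lo : ℕ):ℝ) ^ cexp with hPdef
      set Q := ((hi-(p+1) : ℕ):ℝ) ^ cexp with hQdef
      have hl1 : (1:ℕ) ≤ p+1-lo := by omega
      have hr1 : (1:ℕ) ≤ hi-(p+1) := by omega
      have hlr : ((hi-lo : ℕ):ℝ) = ((p+1-lo : ℕ):ℝ) + ((hi-(p+1) : ℕ):ℝ) := by
        have : (hi-lo : ℕ) = (p+1-lo) + (hi-(p+1)) := by omega
        rw [this]; push_cast; ring
      set M := ((hi-lo : ℕ):ℝ) ^ cexp with hMdef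
      have hlc : (0:ℝ) < ((p+1-lo : ℕ):ℝ) := by exact_mod_cast Nat.lt_of_lt_of_le Nat.zero_lt_one hl1
      have hrc : (0:ℝ) < ((hi-(p+1) : ℕ):ℝ) := by exact_mod_cast Nat.lt_of_lt_of_le Nat.zero_lt_one hr1
      have hP0 : 0 < P := Real.rpow_pos_of_pos hlc _
      have hQ0 : 0 < Q := Real.rpow_pos_of_pos hrc _
      have hPM : P ≤ M := by
        rw [hPdef, hMdef]
        exact Real.rpow_le_rpow hlc.le (by rw [hlr]; linarith [hrc]) cexp_nonneg
      have hQM : Q ≤ M := by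
        rw [hQdef, hMdef]
        exact Real.rpow_le_rpow hrc.le (by rw [hlr]; linarith [hlc]) cexp_nonneg
      have hkey : 3 * (P * Q) ≤ M * (P + Q) := by
        have := key_ineq _ _ hlc hrc
        rw [hMdef, hlr]
        exact this
      -- bound on middle gap
      have hgP : x (2*p+2) - x (2*p+1) ≤ P * Al := by
        have h1 := hpre p hplo hphi
        linarith [T1, hL]
      have hgQ : x (2*p+2) - x (2*p+1) ≤ Q * Ar := by
        have h1 := hsuf p hplo hphi
        linarith [T2, hR]
      -- convex combination coefficients
      set lam := min (M/P - 1) 1 with hlam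
      have hlam0 : 0 ≤ lam := le_min (by rw [le_sub_iff_add_le, zero_add, le_div_iff₀ hP0, one_mul]; exact hPM) zero_le_one
      have hlam1 : lam ≤ 1 := min_le_right _ _
      have hlamP : lam * P ≤ M - P := by
        have h1 : lam ≤ M/P - 1 := min_le_left _ _
        have := mul_le_mul_of_nonneg_right h1 hP0.le
        calc lam * P ≤ (M/P - 1) * P := this
          _ = M - P := by field_simp
      have hmuQ : (1 - lam) * Q ≤ M - Q := by
        rcases le_or_gt (M/P - 1) 1 with h | h
        · have hlameq : lam = M/P - 1 := min_eq_left h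
          have hdiv : 3 ≤ M/P + M/Q := by
            rw [div_add_div _ _ (ne_of_gt hP0) (ne_of_gt hQ0), le_div_iff₀ (by positivity)]
            nlinarith [hkey]
          have h1 : 1 - lam ≤ M/Q - 1 := by rw [hlameq]; linarith
          have := mul_le_mul_of_nonneg_right h1 hQ0.le
          calc (1 - lam) * Q ≤ (M/Q - 1) * Q := this
            _ = M - Q := by field_simp
        · have hlameq : lam = 1 := min_eq_right h.le
          rw [hlameq]
          simp
          exact hQM
      -- middle gap convex bound
      have hgap : x (2*p+2) - x (2*p+1) ≤ lam * (P * Al) + (1 - lam) * (Q * Ar) := by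
        have e1 := mul_le_mul_of_nonneg_left hgP hlam0
        have e2 := mul_le_mul_of_nonneg_left hgQ (by linarith : (0:ℝ) ≤ 1 - lam)
        have hid : lam * (x (2*p+2) - x (2*p+1)) + (1 - lam) * (x (2*p+2) - x (2*p+1))
            = x (2*p+2) - x (2*p+1) := by ring
        linarith [e1, e2, hid]
      -- assemble
      rw [Sg, Sa]
      have eL : lam * (P * Al) ≤ (M - P) * Al :=
        by calc lam * (P * Al) = (lam * P) * Al := by ring
            _ ≤ (M - P) * Al := mul_le_mul_of_nonneg_right hlamP hAL0
      have eR : (1 - lam) * (Q * Ar) ≤ (M - Q) * Ar :=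
        by calc (1 - lam) * (Q * Ar) = ((1-lam) * Q) * Ar := by ring
            _ ≤ (M - Q) * Ar := mul_le_mul_of_nonneg_right hmuQ hAR0
      linarith [hL, hR, hgap, eL, eR]



lemma Mshift_zero (n : ℕ) : Mshift n 0 = n - 1 := by simp [Mshift]

lemma Mshift_last (n : ℕ) (h : 2 ≤ n) : Mshift n (n-1) = 0 := by
  unfold Mshift
  rw [if_neg (by omega), if_pos rfl]

lemma Mshift_odd (n u : ℕ) (h1 : u % 2 = 1) (h2 : u ≠ n - 1) : Mshift n u = u + 1 := by
  unfold Mshift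
  rw [if_neg (by omega), if_neg h2, if_pos h1]

lemma Mshift_even (n u : ℕ) (h1 : u % 2 = 0) (h0 : u ≠ 0) (h2 : u ≠ n-1) : Mshift n u = u - 1 := by
  unfold Mshift
  rw [if_neg h0, if_neg h2, if_neg (by omega)]


set_option maxHeartbeats 1000000 in
/-- Among all weighted line graphs on `2^k` points
`x_0 < x_1 < … < x_{2^k-1}` (weights are line distances) for which the shifted
matching `M(G)` (edges `(x_{2i+1}, x_{2i+2})` together with `(x_0, x_{2^k-1})`)
is stable, the ratio of the cost of `M(G)` to the cost of the consecutive-pairs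
minimum-cost matching `M*(G)` is at most `2·(3/2)^(k-1) - 1`, the ratio
attained by the Reingold-Tarjan configuration `RT^k`. -/
theorem stmt_8 (k : ℕ) (hk : 1 ≤ k) (x : ℕ → ℝ)
    (hmono : ∀ i j : ℕ, i < j → j < 2^k → x i < x j)
    -- stability of the shifted matching M(G)
    (hstable : ∀ u v : ℕ, u < 2^k → v < 2^k → u ≠ v → Mshift (2^k) u ≠ v →
      ¬ (|x u - x v| <
          min |x u - x (Mshift (2^k) u)| |x v - x (Mshift (2^k) v)|)) :
    ((∑ i ∈ Finset.range (2^(k-1) - 1), (x (2*i+2) - x (2*i+1)))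
        + (x (2^k - 1) - x 0))
      / (∑ i ∈ Finset.range (2^(k-1)), (x (2*i+1) - x (2*i)))
      ≤ 2 * (3/2 : ℝ)^(k-1) - 1 := by
  have hnm : 2^k = 2 * 2^(k-1) := by
    conv_lhs => rw [show k = (k-1)+1 by omega]
    ring
  set n := 2^k with hn
  set m := 2^(k-1) with hm
  have hm1 : 1 ≤ m := Nat.one_le_two_pow
  have habs : ∀ u v, u < v → v < n → |x u - x v| = x v - x u := by
    intro u v huv hv
    rw [abs_sub_comm, abs_of_pos (sub_pos.2 (hmono u v huv hv))]
  have habs' : ∀ u v, u < v → v < n → |x v - x u| = x v - x u := by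
    intro u v huv hv
    rw [abs_of_pos (sub_pos.2 (hmono u v huv hv))]
  have ha : ∀ i, 0 ≤ i → i < m → 0 ≤ x (2*i+1) - x (2*i) := fun i _ hi =>
    (sub_pos.2 (hmono _ _ (by omega) (by omega))).le
  have hpre : ∀ j, 0 ≤ j → j < m - 1 → x (2*j+2) - x (2*j+1) ≤ x (2*j+1) - x (2*0) := by
    intro j _ hj
    have hst := hstable 0 (2*j+1) (by omega) (by omega) (by omega)
      (by rw [Mshift_zero]; omega)
    rw [Mshift_zero, Mshift_odd n (2*j+1) (by omega) (by omega), not_lt,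
      habs 0 (2*j+1) (by omega) (by omega), habs 0 (n-1) (by omega) (by omega),
      habs (2*j+1) (2*j+2) (by omega) (by omega)] at hst
    have hlt : x (2*j+1) - x 0 < x (n-1) - x 0 :=
      sub_lt_sub_right (hmono (2*j+1) (n-1) (by omega) (by omega)) _
    rw [show 2*0 = 0 from rfl]
    rcases le_total (x (n-1) - x 0) (x (2*j+2) - x (2*j+1)) with h | h
    · rw [min_eq_left h] at hst; linarith
    · rw [min_eq_right h] at hst; linarith
  have hsuf : ∀ j, 0 ≤ j → j < m - 1 → x (2*j+2) - x (2*j+1) ≤ x (2*m-1) - x (2*j+2) := by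
    intro j _ hj
    have hst := hstable (2*j+2) (n-1) (by omega) (by omega) (by omega)
      (by rw [Mshift_even n (2*j+2) (by omega) (by omega) (by omega)]; omega)
    rw [Mshift_even n (2*j+2) (by omega) (by omega) (by omega),
      Mshift_last n (by omega), not_lt, show 2*j+2-1 = 2*j+1 from by omega,
      habs (2*j+2) (n-1) (by omega) (by omega),
      habs' (2*j+1) (2*j+2) (by omega) (by omega),
      habs' 0 (n-1) (by omega) (by omega)] at hst
    have hlt : x (n-1) - x (2*j+2) < x (n-1) - x 0 :=
      sub_lt_sub_left (hmono 0 (2*j+2) (by omega) (by omega)) _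
    rw [show 2*m-1 = n-1 from by omega]
    rcases le_total (x (2*j+2) - x (2*j+1)) (x (n-1) - x 0) with h | h
    · rw [min_eq_left h] at hst; linarith
    · rw [min_eq_right h] at hst; linarith
  have hB : ∀ i j, 0 ≤ i → i < j → j < m - 1 →
      min (x (2*i+2) - x (2*i+1)) (x (2*j+2) - x (2*j+1)) ≤ x (2*j+1) - x (2*i+2) := by
    intro i j _ hij hj
    have hst := hstable (2*i+2) (2*j+1) (by omega) (by omega) (by omega)
      (by rw [Mshift_even n (2*i+2) (by omega) (by omega) (by omega)]; omega)
    rw [Mshift_even n (2*i+2) (by omega) (by omega) (by omega),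
      Mshift_odd n (2*j+1) (by omega) (by omega), not_lt,
      habs (2*i+2) (2*j+1) (by omega) (by omega),
      habs (2*j+1) (2*j+2) (by omega) (by omega),
      show 2*i+2-1 = 2*i+1 from by omega,
      habs' (2*i+1) (2*i+2) (by omega) (by omega)] at hst
    exact hst
  have hmain := main_lemma x m 0 m (by omega) (by omega) ha hpre hsuf hB
  rw [Nat.sub_zero] at hmain
  have T := telescope x 0 (m-1) (by omega)
  rw [show m-1+1 = m from by omega, show 2*(m-1)+1 = n-1 from by omega,
    show 2*0 = 0 from rfl] at T
  have hA : 0 < (Finset.Ico 0 m).sum (fun i => x (2*i+1) - x (2*i)) :=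
    Finset.sum_pos (fun i hi => by
      rw [Finset.mem_Ico] at hi
      exact sub_pos.2 (hmono _ _ (by omega) (by omega)))
      ⟨0, by rw [Finset.mem_Ico]; omega⟩
  have hR : ((m : ℕ):ℝ) ^ cexp = (3/2:ℝ)^(k-1) := by
    rw [hm]
    push_cast
    rw [← Real.rpow_natCast (2:ℝ) (k-1), ← Real.rpow_mul (by norm_num), mul_comm,
      Real.rpow_mul (by norm_num), two_rpow_cexp, Real.rpow_natCast]
  rw [hR] at hmain
  rw [Finset.range_eq_Ico, Finset.range_eq_Ico, div_le_iff₀ hA]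
  linarith [hmain, T]
end

section
/- In the greedy flipping process on a metric graph, if flipping an alpha-unstable edge e creates a new alpha-unstable edge b (with respect to the resulting matching), then w(b) > w(e). -/
/-- in a complete metric graph, if flipping an `α`-unstable edge
`(u,v)` of the perfect matching `M` (replacing `(u, M u)` and `(v, M v)` by
`(u,v)` and `(M u, M v)`) creates a new `α`-unstable edge `(a,b)` (one that was
`α`-stable before the flip and is `α`-unstable afterwards), then
`w a b > w u v`. -/
theorem stmt_9 (n : ℕ) (hn : 0 < n) (α : ℝ) (hα : 1 ≤ α)
    (w : Fin (2*n) → Fin (2*n) → ℝ)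
    (hsymm : ∀ u v, w u v = w v u)
    (hpos : ∀ u v, u ≠ v → 0 < w u v)
    (htri : ∀ u v x, u ≠ v → v ≠ x → u ≠ x → w u x ≤ w u v + w v x)
    (M : Fin (2*n) → Fin (2*n))
    (hMinv : Function.Involutive M) (hMnf : ∀ x, M x ≠ x)
    (u v : Fin (2*n)) (huv : u ≠ v) (hnotM : M u ≠ v)
    -- (u,v) is α-unstable with respect to M
    (hunst : α * w u v < min (w u (M u)) (w v (M v)))
    -- M' is the matching obtained by flipping (u,v)
    (M' : Fin (2*n) → Fin (2*n))
    (hM' : M' = fun x =>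
      if x = u then v else if x = v then u
      else if x = M u then M v else if x = M v then M u else M x)
    (a b : Fin (2*n)) (hab : a ≠ b)
    -- (a,b) was α-stable before the flip (in particular not treated as
    -- unstable whether or not it was a matching edge of M)
    (hbefore : ¬ (M a ≠ b ∧ α * w a b < min (w a (M a)) (w b (M b))))
    -- (a,b) is α-unstable after the flip
    (hafterNM : M' a ≠ b)
    (hafter : α * w a b < min (w a (M' a)) (w b (M' b))) :
    w u v < w a b := by

  have hα0 : (0:ℝ) < α := lt_of_lt_of_le one_pos hα
  have hw0 : 0 < w u v := hpos u v huv
  have hvu : v ≠ u := huv.symm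
  have hMuu : M u ≠ u := hMnf u
  have hMvv : M v ≠ v := hMnf v
  have hMvu : M v ≠ u := fun h => hnotM (by rw [← h, hMinv])
  have hMuMv : M u ≠ M v := fun h => huv (hMinv.injective h)
  have e1 : M' u = v := by rw [hM']; simp
  have e2 : M' v = u := by rw [hM']; simp [hvu]
  have e3 : M' (M u) = M v := by rw [hM']; simp [hMuu, hnotM]
  have e4 : M' (M v) = M u := by rw [hM']; simp [hMvu, hMvv, hMuMv.symm]
  have e5 : ∀ x, x ≠ u → x ≠ v → x ≠ M u → x ≠ M v → M' x = M x := by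
    intro x g1 g2 g3 g4; rw [hM']; simp [g1, g2, g3, g4]
  have h1 : α * w u v < w u (M u) := lt_of_lt_of_le hunst (min_le_left _ _)
  have h2 : α * w u v < w v (M v) := lt_of_lt_of_le hunst (min_le_right _ _)
  have key : ∀ p q : ℝ, 0 < p → α * p < q → α * q < p → False := by
    intro p q hp hpq hqp
    have hq : 0 < q := lt_trans (mul_pos hα0 hp) hpq
    have h3 : p ≤ α * p := le_mul_of_one_le_left hp.le hα
    have h4 : q ≤ α * q := le_mul_of_one_le_left hq.le hα
    linarith
  have hA : α * w a b < w a (M' a) := lt_of_lt_of_le hafter (min_le_left _ _)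
  have hB : α * w a b < w b (M' b) := lt_of_lt_of_le hafter (min_le_right _ _)
  by_cases hMab : M a = b
  · exfalso
    subst hMab
    by_cases ha1 : a = u
    · subst ha1; rw [e1] at hA; exact key _ _ hw0 h1 hA
    by_cases ha2 : a = v
    · rw [ha2] at hA; rw [e2, hsymm v u] at hA; exact key _ _ hw0 h2 hA
    by_cases ha3 : a = M u
    · subst ha3
      rw [hMinv u] at hB
      rw [e1, hsymm (M u) u] at hB
      exact key _ _ hw0 h1 hB
    by_cases ha4 : a = M v
    · subst ha4
      rw [hMinv v] at hB
      rw [e2, hsymm (M v) v, hsymm v u] at hB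
      exact key _ _ hw0 h2 hB
    · exact hafterNM (e5 a ha1 ha2 ha3 ha4)
  · push_neg at hbefore
    have hmin : min (w a (M a)) (w b (M b)) ≤ α * w a b := hbefore hMab
    rcases le_or_gt (w a (M a)) (w b (M b)) with hle | hlt
    · have hx : w a (M a) ≤ α * w a b := by rwa [min_eq_left hle] at hmin
      have hinc : w a (M a) < w a (M' a) := lt_of_le_of_lt hx hA
      by_cases ha1 : a = u
      · subst ha1; rw [e1] at hinc; exfalso; nlinarith
      by_cases ha2 : a = v
      · rw [ha2] at hinc; rw [e2, hsymm v u] at hinc; exfalso; nlinarith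
      by_cases ha3 : a = M u
      · subst ha3
        rw [hMinv u, hsymm (M u) u] at hx
        exact lt_of_mul_lt_mul_left (lt_of_lt_of_le h1 hx) hα0.le
      by_cases ha4 : a = M v
      · subst ha4
        rw [hMinv v, hsymm (M v) v] at hx
        exact lt_of_mul_lt_mul_left (lt_of_lt_of_le h2 hx) hα0.le
      · rw [e5 a ha1 ha2 ha3 ha4] at hinc; exact absurd hinc (lt_irrefl _)
    · have hx : w b (M b) ≤ α * w a b := by rwa [min_eq_right hlt.le] at hmin
      have hinc : w b (M b) < w b (M' b) := lt_of_le_of_lt hx hB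
      by_cases hb1 : b = u
      · subst hb1; rw [e1] at hinc; exfalso; nlinarith
      by_cases hb2 : b = v
      · rw [hb2] at hinc; rw [e2, hsymm v u] at hinc; exfalso; nlinarith
      by_cases hb3 : b = M u
      · subst hb3
        rw [hMinv u, hsymm (M u) u] at hx
        exact lt_of_mul_lt_mul_left (lt_of_lt_of_le h1 hx) hα0.le
      by_cases hb4 : b = M v
      · subst hb4
        rw [hMinv v, hsymm (M v) v] at hx
        exact lt_of_mul_lt_mul_left (lt_of_lt_of_le h2 hx) hα0.le
      · rw [e5 b hb1 hb2 hb3 hb4] at hinc; exact absurd hinc (lt_irrefl _)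
end

section
/- In an execution of the greedy algorithm that processes edges in non-decreasing weight order and flips each edge that is alpha-unstable with respect to the current matching, any edge that is flipped remains in the matching for all subsequent iterations; in particular it belongs to the final matching. -/
/-- The result of flipping the edge `(u,v)` in the matching `M`:
`(u, M u)` and `(v, M v)` are replaced by `(u, v)` and `(M u, M v)`. -/
def flipFn {m : ℕ} (M : Fin m → Fin m) (u v : Fin m) : Fin m → Fin m :=
  fun x =>
    if x = u then v else if x = v then u
    else if x = M u then M v else if x = M v then M u else M x

lemma flip_u {m : ℕ} (M : Fin m → Fin m) (u v : Fin m) : flipFn M u v u = v := by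
  simp [flipFn]

lemma flip_gen {m : ℕ} (M : Fin m → Fin m) (u v x : Fin m)
    (h1 : x ≠ u) (h2 : x ≠ v) (h3 : x ≠ M u) (h4 : x ≠ M v) :
    flipFn M u v x = M x := by
  simp [flipFn, h1, h2, h3, h4]

lemma flip_good {m : ℕ} (M : Fin m → Fin m) (hinv : Function.Involutive M)
    (hnf : ∀ x, M x ≠ x) (u v : Fin m) (huv : u ≠ v) (hMuv : M u ≠ v) :
    Function.Involutive (flipFn M u v) ∧ ∀ x, flipFn M u v x ≠ x := by
  have hMvu : M v ≠ u := fun h => hMuv (by rw [← h, hinv])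
  have hMuu : M u ≠ u := hnf u
  have hMvv : M v ≠ v := hnf v
  have hMuMv : M u ≠ M v := fun h => huv (hinv.injective h)
  have Fu : flipFn M u v u = v := flip_u M u v
  have Fv : flipFn M u v v = u := by simp [flipFn, Ne.symm huv]
  have FMu : flipFn M u v (M u) = M v := by simp [flipFn, hMuu, hMuv]
  have FMv : flipFn M u v (M v) = M u := by simp [flipFn, hMvu, hMvv, hMuMv.symm]
  constructor
  · intro x
    by_cases h1 : x = u
    · subst h1; rw [Fu, Fv]
    by_cases h2 : x = v
    · subst h2; rw [Fv, Fu]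
    by_cases h3 : x = M u
    · subst h3; rw [FMu, FMv]
    by_cases h4 : x = M v
    · subst h4; rw [FMv, FMu]
    · rw [flip_gen M u v x h1 h2 h3 h4]
      have g1 : M x ≠ u := fun h => h3 (by rw [← h, hinv])
      have g2 : M x ≠ v := fun h => h4 (by rw [← h, hinv])
      have g3 : M x ≠ M u := fun h => h1 (hinv.injective h)
      have g4 : M x ≠ M v := fun h => h2 (hinv.injective h)
      rw [flip_gen M u v _ g1 g2 g3 g4, hinv]
  · intro x
    by_cases h1 : x = u
    · subst h1; rw [Fu]; exact Ne.symm huv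
    by_cases h2 : x = v
    · subst h2; rw [Fv]; exact huv
    by_cases h3 : x = M u
    · subst h3; rw [FMu]; exact Ne.symm hMuMv
    by_cases h4 : x = M v
    · subst h4; rw [FMv]; exact hMuMv
    · rw [flip_gen M u v x h1 h2 h3 h4]; exact hnf x

/-- in an execution of the greedy algorithm — starting from a
minimum-cost perfect matching and processing all edges `e 0, e 1, …` in
non-decreasing weight order, flipping each edge that is `α`-unstable with
respect to the current matching — any edge that is flipped remains in the
matching in all subsequent iterations; in particular it belongs to the final
matching `Ms N`. -/
theorem stmt_10 (n : ℕ) (hn : 0 < n) (α : ℝ) (hα : 1 ≤ α)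
    (w : Fin (2*n) → Fin (2*n) → ℝ)
    (hsymm : ∀ u v, w u v = w v u)
    (hpos : ∀ u v, u ≠ v → 0 < w u v)
    (htri : ∀ u v x, u ≠ v → v ≠ x → u ≠ x → w u x ≤ w u v + w v x)
    (N : ℕ) (e : Fin N → Fin (2*n) × Fin (2*n))
    (hne : ∀ i, (e i).1 ≠ (e i).2)
    -- every (unordered) edge of the complete graph appears in the list
    (hall : ∀ u v : Fin (2*n), u ≠ v → ∃ i, e i = (u, v) ∨ e i = (v, u))
    -- edges are processed by non-decreasing weight
    (hsorted : ∀ i j : Fin N, i ≤ j →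
      w (e i).1 (e i).2 ≤ w (e j).1 (e j).2)
    (Ms : ℕ → Fin (2*n) → Fin (2*n))
    (hM0inv : Function.Involutive (Ms 0)) (hM0nf : ∀ x, Ms 0 x ≠ x)
    -- Ms 0 is a minimum-cost perfect matching
    (hM0opt : ∀ M' : Fin (2*n) → Fin (2*n), Function.Involutive M' →
      (∀ x, M' x ≠ x) → (∑ x, w x (Ms 0 x)) ≤ ∑ x, w x (M' x))
    -- one greedy step per edge: flip it iff it is α-unstable
    (hstep : ∀ i : Fin N,
      ((Ms i (e i).1 ≠ (e i).2 ∧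
          α * w (e i).1 (e i).2 <
            min (w (e i).1 (Ms i (e i).1)) (w (e i).2 (Ms i (e i).2))) ∧
        Ms (i + 1) = flipFn (Ms i) (e i).1 (e i).2) ∨
      (¬ (Ms i (e i).1 ≠ (e i).2 ∧
          α * w (e i).1 (e i).2 <
            min (w (e i).1 (Ms i (e i).1)) (w (e i).2 (Ms i (e i).2))) ∧
        Ms (i + 1) = Ms i)) :
    ∀ i : Fin N,
      (Ms i (e i).1 ≠ (e i).2 ∧
        α * w (e i).1 (e i).2 <
          min (w (e i).1 (Ms i (e i).1)) (w (e i).2 (Ms i (e i).2))) →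
      ∀ j : ℕ, (i : ℕ) < j → j ≤ N → Ms j (e i).1 = (e i).2 := by
  -- invariant: each matching in the run is involutive and fixed-point-free
  have inv : ∀ k, k ≤ N → Function.Involutive (Ms k) ∧ ∀ x, Ms k x ≠ x := by
    intro k
    induction k with
    | zero => exact fun _ => ⟨hM0inv, hM0nf⟩
    | succ k ih =>
      intro hk
      have hkN : k < N := hk
      have ihk := ih (le_of_lt hkN)
      rcases hstep ⟨k, hkN⟩ with ⟨⟨hc1, _⟩, heq⟩ | ⟨-, heq⟩
      · have heq' : Ms (k + 1) = flipFn (Ms k) (e ⟨k, hkN⟩).1 (e ⟨k, hkN⟩).2 := heq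
        rw [heq']
        exact flip_good _ ihk.1 ihk.2 _ _ (hne ⟨k, hkN⟩) hc1
      · have heq' : Ms (k + 1) = Ms k := heq
        rw [heq']; exact ihk
  intro i hcond j hij hjN
  revert hjN
  induction j, hij using Nat.le_induction with
  | base =>
    intro _
    rcases hstep i with ⟨_, heq⟩ | ⟨hnc, _⟩
    · rw [heq]; exact flip_u _ _ _
    · exact absurd hcond hnc
  | succ j hj ih =>
    intro hjN
    have hjlt : j < N := hjN
    have hprev : Ms j (e i).1 = (e i).2 := ih (le_of_lt hjlt)
    have huv : (e i).1 ≠ (e i).2 := hne i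
    rcases hstep ⟨j, hjlt⟩ with ⟨⟨hc1, hc2⟩, heq⟩ | ⟨-, heq⟩
    swap
    · have heq' : Ms (j + 1) = Ms j := heq
      rw [heq']; exact hprev
    · set a := (e ⟨j, hjlt⟩).1 with ha
      set b := (e ⟨j, hjlt⟩).2 with hb
      have heq' : Ms (j + 1) = flipFn (Ms j) a b := heq
      have hinvj : Function.Involutive (Ms j) := (inv j (le_of_lt hjlt)).1
      -- key weight facts
      have hle : w (e i).1 (e i).2 ≤ w a b :=
        hsorted i ⟨j, hjlt⟩ (by rw [Fin.le_def]; simp; omega)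
      have hwab : 0 < w a b := hpos a b (hne ⟨j, hjlt⟩)
      have habs : ¬ (min (w a (Ms j a)) (w b (Ms j b)) ≤ w (e i).1 (e i).2) := by
        intro hmin
        have h1 : w a b ≤ α * w a b := by nlinarith
        linarith
      by_cases h1 : (e i).1 = a
      · exfalso
        apply habs
        have : Ms j a = (e i).2 := h1 ▸ hprev
        rw [this] at *
        calc min (w a (e i).2) (w b (Ms j b)) ≤ w a (e i).2 := min_le_left _ _
          _ = w (e i).1 (e i).2 := by rw [h1]
      by_cases h2 : (e i).1 = b
      · exfalso
        apply habs
        have : Ms j b = (e i).2 := h2 ▸ hprev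
        rw [this]
        calc min (w a (Ms j a)) (w b (e i).2) ≤ w b (e i).2 := min_le_right _ _
          _ = w (e i).1 (e i).2 := by rw [h2]
      by_cases h3 : (e i).1 = Ms j a
      · exfalso
        apply habs
        have hav : a = (e i).2 := by rw [← hprev, h3, hinvj]
        have hMa : Ms j a = (e i).1 := h3.symm
        rw [hMa, hav]
        calc min (w (e i).2 (e i).1) (w b (Ms j b)) ≤ w (e i).2 (e i).1 := min_le_left _ _
          _ = w (e i).1 (e i).2 := hsymm _ _
      by_cases h4 : (e i).1 = Ms j b
      · exfalso
        apply habs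
        have hbv : b = (e i).2 := by rw [← hprev, h4, hinvj]
        have hMb : Ms j b = (e i).1 := h4.symm
        rw [hMb, hbv]
        calc min (w a (Ms j a)) (w (e i).2 (e i).1) ≤ w (e i).2 (e i).1 := min_le_right _ _
          _ = w (e i).1 (e i).2 := hsymm _ _
      · rw [heq', flip_gen (Ms j) a b _ h1 h2 h3 h4]
        exact hprev
end

section
/- The matching returned by the greedy flipping algorithm (processing all edges in non-decreasing weight order, flipping each currently alpha-unstable edge) is an alpha-stable perfect matching. -/
namespace Stmt11Aux

variable {m : ℕ}

lemma flip_eval (M : Fin m → Fin m) (u v : Fin m)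
    (hM : Function.Involutive M) (hnf : ∀ x, M x ≠ x)
    (huv : u ≠ v) (hMuv : M u ≠ v) :
    flipFn M u v u = v ∧ flipFn M u v v = u ∧
    flipFn M u v (M u) = M v ∧ flipFn M u v (M v) = M u ∧
    ∀ x, x ≠ u → x ≠ v → x ≠ M u → x ≠ M v → flipFn M u v x = M x := by
  have hvu : M v ≠ u := fun h => hMuv (by rw [← h, hM v])
  have hMuMv : M u ≠ M v := fun h => huv (hM.injective h)
  refine ⟨?_, ?_, ?_, ?_, ?_⟩
  · simp [flipFn]
  · simp [flipFn, Ne.symm huv]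
  · simp [flipFn, hnf u, hMuv]
  · simp [flipFn, hvu, hnf v, hMuMv.symm]
  · intro x h1 h2 h3 h4
    simp [flipFn, h1, h2, h3, h4]

lemma flip_involutive (M : Fin m → Fin m) (u v : Fin m)
    (hM : Function.Involutive M) (hnf : ∀ x, M x ≠ x)
    (huv : u ≠ v) (hMuv : M u ≠ v) :
    Function.Involutive (flipFn M u v) := by
  obtain ⟨e1, e2, e3, e4, e5⟩ := flip_eval M u v hM hnf huv hMuv
  have hvu : M v ≠ u := fun h => hMuv (by rw [← h, hM v])
  have hMuMv : M u ≠ M v := fun h => huv (hM.injective h)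
  intro x
  by_cases h1 : x = u
  · subst h1; rw [e1, e2]
  by_cases h2 : x = v
  · subst h2; rw [e2, e1]
  by_cases h3 : x = M u
  · subst h3; rw [e3, e4]
  by_cases h4 : x = M v
  · subst h4; rw [e4, e3]
  · rw [e5 x h1 h2 h3 h4]
    have g1 : M x ≠ u := fun h => h3 (by rw [← h, hM x])
    have g2 : M x ≠ v := fun h => h4 (by rw [← h, hM x])
    have g3 : M x ≠ M u := fun h => h1 (hM.injective h)
    have g4 : M x ≠ M v := fun h => h2 (hM.injective h)
    rw [e5 (M x) g1 g2 g3 g4, hM x]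

lemma flip_nofix (M : Fin m → Fin m) (u v : Fin m)
    (hM : Function.Involutive M) (hnf : ∀ x, M x ≠ x)
    (huv : u ≠ v) (hMuv : M u ≠ v) :
    ∀ x, flipFn M u v x ≠ x := by
  obtain ⟨e1, e2, e3, e4, e5⟩ := flip_eval M u v hM hnf huv hMuv
  have hvu : M v ≠ u := fun h => hMuv (by rw [← h, hM v])
  have hMuMv : M u ≠ M v := fun h => huv (hM.injective h)
  intro x
  by_cases h1 : x = u
  · subst h1; rw [e1]; exact Ne.symm huv
  by_cases h2 : x = v
  · subst h2; rw [e2]; exact huv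
  by_cases h3 : x = M u
  · subst h3; rw [e3]; exact hMuMv.symm
  by_cases h4 : x = M v
  · subst h4; rw [e4]; exact hMuMv
  · rw [e5 x h1 h2 h3 h4]; exact hnf x

/-- Key lemma: if an edge `(a,b)` of weight at most `w u v` is `α`-unstable after
flipping `(u,v)`, it was already `α`-unstable before the flip. -/
lemma key {α : ℝ} (hα : 1 ≤ α) (w : Fin m → Fin m → ℝ)
    (hsymm : ∀ u v, w u v = w v u) (hpos : ∀ u v, u ≠ v → 0 < w u v)
    (M : Fin m → Fin m) (hM : Function.Involutive M) (hnf : ∀ x, M x ≠ x)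
    (u v : Fin m) (huv : u ≠ v) (hMuv : M u ≠ v)
    (hflip : α * w u v < min (w u (M u)) (w v (M v)))
    (a b : Fin m) (hab : a ≠ b) (hw : w a b ≤ w u v)
    (hM'ab : flipFn M u v a ≠ b)
    (hunst : α * w a b < min (w a (flipFn M u v a)) (w b (flipFn M u v b))) :
    M a ≠ b ∧ α * w a b < min (w a (M a)) (w b (M b)) := by
  obtain ⟨e1, e2, e3, e4, e5⟩ := flip_eval M u v hM hnf huv hMuv
  have hα0 : (0:ℝ) < α := lt_of_lt_of_le zero_lt_one hα
  have hwab : α * w a b ≤ α * w u v := by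
    exact mul_le_mul_of_nonneg_left hw (le_of_lt hα0)
  have hfu : α * w u v < w u (M u) := lt_of_lt_of_le hflip (min_le_left _ _)
  have hfv : α * w u v < w v (M v) := lt_of_lt_of_le hflip (min_le_right _ _)
  have ha' : α * w a b < w a (flipFn M u v a) :=
    lt_of_lt_of_le hunst (min_le_left _ _)
  have hb' : α * w a b < w b (flipFn M u v b) :=
    lt_of_lt_of_le hunst (min_le_right _ _)
  -- step 1: the instability inequality transfers to M
  have hE : w u v = w v u := hsymm u v
  have trans : ∀ x : Fin m, α * w a b < w x (flipFn M u v x) →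
      α * w a b < w x (M x) := by
    intro x hx
    by_cases h1 : x = u
    · subst h1; exact lt_of_le_of_lt hwab hfu
    by_cases h2 : x = v
    · subst h2; exact lt_of_le_of_lt hwab hfv
    by_cases h3 : x = M u
    · subst h3
      rw [hM u, hsymm (M u) u]
      exact lt_of_le_of_lt hwab hfu
    by_cases h4 : x = M v
    · subst h4
      rw [hM v, hsymm (M v) v]
      exact lt_of_le_of_lt hwab hfv
    · rwa [e5 x h1 h2 h3 h4] at hx
  refine ⟨?_, lt_min (trans a ha') (trans b hb')⟩
  -- step 2: M a ≠ b
  intro hMab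
  have hFa : flipFn M u v a ≠ M a := by rw [hMab]; exact hM'ab
  have hwuv0 : 0 < w u v := hpos u v huv
  have hwab0 : 0 < w a b := hpos a b hab
  have h5 : w u v ≤ α * w u v := le_mul_of_one_le_left hwuv0.le hα
  have h6 : w a b ≤ α * w a b := le_mul_of_one_le_left hwab0.le hα
  by_cases h1 : a = u
  · -- then b = M u
    have hA : α * w u b < w u v := by
      rw [h1, e1] at ha'; exact ha'
    have hB : α * w u v < w u b := by
      rw [← hMab, h1]
      exact hfu
    have : w a b = w u b := by rw [h1]
    rw [this] at h6
    linarith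
  by_cases h2 : a = v
  · -- then b = M v
    have hA : α * w v b < w v u := by
      rw [h2, e2] at ha'; exact ha'
    have hB : α * w u v < w v b := by
      rw [← hMab, h2]
      exact hfv
    have : w a b = w v b := by rw [h2]
    rw [this] at h6
    linarith
  by_cases h3 : a = M u
  · -- then b = u
    have hb : b = u := by rw [← hMab, h3]; exact hM u
    have hA : α * w a u < w u v := by
      rw [hb] at hb'; rw [e1] at hb'; exact hb'
    have hB : α * w u v < w u a := by rw [h3]; exact hfu
    have hE2 : w a u = w u a := hsymm a u
    have : w a b = w a u := by rw [hb]
    rw [this] at h6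
    linarith
  by_cases h4 : a = M v
  · -- then b = v
    have hb : b = v := by rw [← hMab, h4]; exact hM v
    have hA : α * w a v < w v u := by
      rw [hb] at hb'; rw [e2] at hb'; exact hb'
    have hB : α * w u v < w v a := by rw [h4]; exact hfv
    have hE2 : w a v = w v a := hsymm a v
    have : w a b = w a v := by rw [hb]
    rw [this] at h6
    linarith
  · exact hFa (e5 a h1 h2 h3 h4)

end Stmt11Aux

/-- the matching returned by the greedy flipping algorithm —
starting from a minimum-cost perfect matching and processing all edges in
non-decreasing weight order, flipping each edge that is `α`-unstable with
respect to the current matching — is an `α`-stable perfect matching. -/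
theorem stmt_11 (n : ℕ) (hn : 0 < n) (α : ℝ) (hα : 1 ≤ α)
    (w : Fin (2*n) → Fin (2*n) → ℝ)
    (hsymm : ∀ u v, w u v = w v u)
    (hpos : ∀ u v, u ≠ v → 0 < w u v)
    (htri : ∀ u v x, u ≠ v → v ≠ x → u ≠ x → w u x ≤ w u v + w v x)
    (N : ℕ) (e : Fin N → Fin (2*n) × Fin (2*n))
    (hne : ∀ i, (e i).1 ≠ (e i).2)
    -- every (unordered) edge of the complete graph appears in the list
    (hall : ∀ u v : Fin (2*n), u ≠ v → ∃ i, e i = (u, v) ∨ e i = (v, u))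
    -- edges are processed by non-decreasing weight
    (hsorted : ∀ i j : Fin N, i ≤ j →
      w (e i).1 (e i).2 ≤ w (e j).1 (e j).2)
    (Ms : ℕ → Fin (2*n) → Fin (2*n))
    (hM0inv : Function.Involutive (Ms 0)) (hM0nf : ∀ x, Ms 0 x ≠ x)
    -- Ms 0 is a minimum-cost perfect matching
    (hM0opt : ∀ M' : Fin (2*n) → Fin (2*n), Function.Involutive M' →
      (∀ x, M' x ≠ x) → (∑ x, w x (Ms 0 x)) ≤ ∑ x, w x (M' x))
    -- one greedy step per edge: flip it iff it is α-unstable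
    (hstep : ∀ i : Fin N,
      ((Ms i (e i).1 ≠ (e i).2 ∧
          α * w (e i).1 (e i).2 <
            min (w (e i).1 (Ms i (e i).1)) (w (e i).2 (Ms i (e i).2))) ∧
        Ms (i + 1) = flipFn (Ms i) (e i).1 (e i).2) ∨
      (¬ (Ms i (e i).1 ≠ (e i).2 ∧
          α * w (e i).1 (e i).2 <
            min (w (e i).1 (Ms i (e i).1)) (w (e i).2 (Ms i (e i).2))) ∧
        Ms (i + 1) = Ms i)) :
    Function.Involutive (Ms N) ∧ (∀ x, Ms N x ≠ x) ∧
      ∀ u v : Fin (2*n), u ≠ v → Ms N u ≠ v →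
        ¬ (α * w u v < min (w u (Ms N u)) (w v (Ms N v))) := by
  have main : ∀ k, k ≤ N → Function.Involutive (Ms k) ∧ (∀ x, Ms k x ≠ x) ∧
      ∀ i : Fin N, (i : ℕ) < k → (Ms k (e i).1 = (e i).2 ∨
        ¬ (α * w (e i).1 (e i).2 <
            min (w (e i).1 (Ms k (e i).1)) (w (e i).2 (Ms k (e i).2)))) := by
    intro k
    induction k with
    | zero =>
      intro _
      exact ⟨hM0inv, hM0nf, fun i hi => absurd hi (Nat.not_lt_zero _)⟩
    | succ k ih =>
      intro hk
      have hkN : k < N := hk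
      obtain ⟨hinv, hnf, hstab⟩ := ih (le_of_lt hkN)
      set j : Fin N := ⟨k, hkN⟩ with hj
      have hjk : (j : ℕ) = k := rfl
      rcases hstep j with ⟨⟨hne', hun⟩, heq⟩ | ⟨hns, heq⟩
      · -- flip case
        rw [hjk] at heq
        have hinv' : Function.Involutive (Ms (k+1)) := by
          rw [heq]
          exact Stmt11Aux.flip_involutive _ _ _ hinv hnf (hne j) hne'
        have hnf' : ∀ x, Ms (k+1) x ≠ x := by
          rw [heq]
          exact Stmt11Aux.flip_nofix _ _ _ hinv hnf (hne j) hne'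
        refine ⟨hinv', hnf', ?_⟩
        intro i hi
        by_cases hik : (i : ℕ) = k
        · have : i = j := Fin.ext hik
          subst this
          left
          rw [heq]
          exact (Stmt11Aux.flip_eval _ _ _ hinv hnf (hne j) hne').1
        · have hilt : (i : ℕ) < k := lt_of_le_of_ne (Nat.lt_succ_iff.mp hi) hik
          have hij : i ≤ j := by
            rw [Fin.le_def, hjk]
            exact le_of_lt hilt
          have hwle : w (e i).1 (e i).2 ≤ w (e j).1 (e j).2 := hsorted i j hij
          by_contra hcon
          push_neg at hcon
          obtain ⟨hc1, hc2⟩ := hcon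
          rw [heq] at hc1 hc2
          have := Stmt11Aux.key hα w hsymm hpos (Ms k) hinv hnf
            (e j).1 (e j).2 (hne j) hne' hun (e i).1 (e i).2 (hne i) hwle hc1 hc2
          rcases hstab i hilt with h | h
          · exact this.1 h
          · exact h this.2
      · -- no flip case
        rw [hjk] at heq
        rw [heq]
        refine ⟨hinv, hnf, ?_⟩
        intro i hi
        by_cases hik : (i : ℕ) = k
        · have : i = j := Fin.ext hik
          subst this
          tauto
        · exact hstab i (lt_of_le_of_ne (Nat.lt_succ_iff.mp hi) hik)
  obtain ⟨hinv, hnf, hstab⟩ := main N le_rfl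
  refine ⟨hinv, hnf, ?_⟩
  intro u v huv hMuv hbad
  obtain ⟨i, hi⟩ := hall u v huv
  rcases hi with hi | hi
  · rcases hstab i i.isLt with h | h
    · rw [hi] at h
      exact hMuv h
    · rw [hi] at h
      exact h hbad
  · rcases hstab i i.isLt with h | h
    · rw [hi] at h
      simp only at h
      exact hMuv (by rw [← h, hinv v])
    · rw [hi] at h
      simp only at h
      rw [hsymm v u, min_comm] at h
      exact h hbad
end

section
/- Let T be a full binary tree whose leaves carry nonnegative real weights wb(ℓ), and extend wb to internal nodes by wb(x) = wb(y) + wb(z) + (1/alpha)*min{wb(y), wb(z)} where y, z are the children of x and alpha >= 1. Then for every node x, wb(x) = sum over leaves ℓ of the subtree of x of (1 + 1/alpha)^{λ(ℓ) - λ(x)} * wb(ℓ), where λ(v) denotes the number of light links (links from a child with the smaller wb-value to its parent) on the path from v to the root. -/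
/-- Full binary trees with real weights at the leaves. -/
inductive FBT where
  | leaf : ℝ → FBT
  | node : FBT → FBT → FBT

/-- The virtual weight `wb`: on a leaf it is the leaf's weight, and on an
internal node with children `y, z` it is
`wb y + wb z + (1/a) * min (wb y) (wb z)`. -/
noncomputable def wb (a : ℝ) : FBT → ℝ
  | .leaf x => x
  | .node l r => wb a l + wb a r + (1/a) * min (wb a l) (wb a r)

/-- The list of leaves of a tree, each recorded together with its light depth:
the number of light links (links from a child of smaller `wb`-value to its
parent, ties going to the left child) on the path from the leaf to the root. -/
noncomputable def leafData (a : ℝ) : FBT → List (ℕ × ℝ)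
  | .leaf x => [(0, x)]
  | .node l r =>
      if wb a l ≤ wb a r then
        ((leafData a l).map fun p => (p.1 + 1, p.2)) ++ leafData a r
      else
        leafData a l ++ ((leafData a r).map fun p => (p.1 + 1, p.2))

/-- All leaf weights are nonnegative. -/
def leavesNonneg : FBT → Prop
  | .leaf x => 0 ≤ x
  | .node l r => leavesNonneg l ∧ leavesNonneg r

lemma bump_sum (a : ℝ) (L : List (ℕ × ℝ)) :
    ((L.map fun p => ((p.1 + 1 : ℕ), p.2)).map fun p => (1 + 1/a)^p.1 * p.2).sum
      = (1 + 1/a) * (L.map fun p => (1 + 1/a)^p.1 * p.2).sum := by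
  induction L with
  | nil => simp
  | cons h t ih =>
      simp only [List.map_cons, List.sum_cons, ih]
      ring

/-- for every node `x` of a full binary tree (i.e., for every
subtree `t`), `wb x = ∑_{leaves ℓ of x} (1 + 1/a)^(λ(ℓ) - λ(x)) · wb(ℓ)`,
where the exponent is the number of light links between `ℓ` and `x`. -/
theorem stmt_12 (a : ℝ) (ha : 1 ≤ a) (t : FBT) (hnn : leavesNonneg t) :
    wb a t = ((leafData a t).map fun p => (1 + 1/a)^p.1 * p.2).sum := by
  induction t with
  | leaf x => simp [wb, leafData]
  | node l r ihl ihr =>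
      obtain ⟨hl, hr⟩ := hnn
      rw [wb, leafData]
      split_ifs with h
      · rw [min_eq_left h]
        simp only [List.map_append, List.sum_append, bump_sum, ← ihl hl, ← ihr hr]
        ring
      · rw [min_eq_right (le_of_not_ge h)]
        simp only [List.map_append, List.sum_append, bump_sum, ← ihl hl, ← ihr hr]
        ring
end

section
/- Let T be a full binary tree with nonnegative leaf weights and wb defined by the recursion wb(x) = wb(heavy child) + (1 + 1/alpha)*wb(light child), alpha >= 1. Then for any leaf ℓ of T, wb(root) >= (2 + 1/alpha)^{λ(ℓ)} * wb(ℓ), where λ(ℓ) is the number of light links on the path from ℓ to the root. -/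
lemma wb_nonneg (a : ℝ) (ha : 1 ≤ a) : ∀ t : FBT, leavesNonneg t → 0 ≤ wb a t
  | .leaf x, h => h
  | .node l r, h => by
    have hl := wb_nonneg a ha l h.1
    have hr := wb_nonneg a ha r h.2
    have ha0 : (0:ℝ) ≤ 1/a := by positivity
    have : 0 ≤ min (wb a l) (wb a r) := le_min hl hr
    simp only [wb]
    nlinarith

/-- for every leaf `ℓ` of a full binary tree `T` with
nonnegative leaf weights, `wb(root) ≥ (2 + 1/a)^(λ(ℓ)) · wb(ℓ)`, where `λ(ℓ)`
is the number of light links on the path from `ℓ` to the root. -/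
theorem stmt_13 (a : ℝ) (ha : 1 ≤ a) (t : FBT) (hnn : leavesNonneg t) :
    ∀ p ∈ leafData a t, (2 + 1/a)^p.1 * p.2 ≤ wb a t := by
  induction t with
  | leaf x =>
    intro p hp
    simp only [leafData, List.mem_singleton] at hp
    subst hp
    simp [wb]
  | node l r ihl ihr =>
    obtain ⟨hl, hr⟩ := hnn
    have hwl := wb_nonneg a ha l hl
    have hwr := wb_nonneg a ha r hr
    have ha0 : (0:ℝ) < 1/a := by positivity
    intro p hp
    simp only [leafData] at hp
    split_ifs at hp with hlr
    · rw [List.mem_append] at hp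
      rcases hp with hp | hp
      · rw [List.mem_map] at hp
        obtain ⟨q, hq, rfl⟩ := hp
        have := ihl hl q hq
        simp only [wb, min_eq_left hlr]
        calc (2 + 1/a)^(q.1+1) * q.2 = (2 + 1/a) * ((2 + 1/a)^q.1 * q.2) := by ring
          _ ≤ (2 + 1/a) * wb a l := by
              apply mul_le_mul_of_nonneg_left this (by linarith)
          _ ≤ wb a l + wb a r + 1/a * wb a l := by nlinarith
      · have := ihr hr p hp
        simp only [wb, min_eq_left hlr]
        nlinarith
    · push_neg at hlr
      rw [List.mem_append] at hp
      rcases hp with hp | hp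
      · have := ihl hl p hp
        simp only [wb, min_eq_right hlr.le]
        nlinarith
      · rw [List.mem_map] at hp
        obtain ⟨q, hq, rfl⟩ := hp
        have := ihr hr q hq
        simp only [wb, min_eq_right hlr.le]
        calc (2 + 1/a)^(q.1+1) * q.2 = (2 + 1/a) * ((2 + 1/a)^q.1 * q.2) := by ring
          _ ≤ (2 + 1/a) * wb a r := by
              apply mul_le_mul_of_nonneg_left this (by linarith)
          _ ≤ wb a l + wb a r + 1/a * wb a r := by nlinarith
end

section
/- An n-leaf wb-balanced full binary tree that maximizes the effect eff(T) = wb(root)/(sum of leaf wb-values) over all n-leaf full binary trees must be complete (all leaves at depth h(T) or h(T)-1). -/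
/-- A tree is `wb`-balanced if every two sibling nodes have equal `wb`-value. -/
def balancedFBT (a : ℝ) : FBT → Prop
  | .leaf _ => True
  | .node l r => wb a l = wb a r ∧ balancedFBT a l ∧ balancedFBT a r


/-- Number of leaves. -/
def numLeaves : FBT → ℕ
  | .leaf _ => 1
  | .node l r => numLeaves l + numLeaves r

/-- Height of the tree. -/
def heightFBT : FBT → ℕ
  | .leaf _ => 0
  | .node l r => max (heightFBT l) (heightFBT r) + 1

/-- The list of depths of the leaves. -/
def leafDepths : FBT → List ℕ
  | .leaf _ => [0]
  | .node l r => (leafDepths l ++ leafDepths r).map (· + 1)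

/-- Sum of the leaf weights. -/
def leafSum : FBT → ℝ
  | .leaf x => x
  | .node l r => leafSum l + leafSum r

/-- A full binary tree is complete if every leaf is at depth `h(T)` or
`h(T) - 1`. -/
def completeFBT (t : FBT) : Prop :=
  ∀ d ∈ leafDepths t, d = heightFBT t ∨ d + 1 = heightFBT t

/-- The effect of a tree: `wb(root)/(sum of leaf weights)` when the leaf sum is
positive, and `1` otherwise. -/
noncomputable def eff (a : ℝ) (t : FBT) : ℝ :=
  if 0 < leafSum t then wb a t / leafSum t else 1

noncomputable def Kr (a : ℝ) : FBT → ℝ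
  | .leaf _ => 1
  | .node l r => (Kr a l + Kr a r) / (2 + 1/a)

noncomputable def setw (a : ℝ) : FBT → ℝ → FBT
  | .leaf _, w => .leaf w
  | .node l r, w => .node (setw a l (w / (2 + 1/a))) (setw a r (w / (2 + 1/a)))

lemma my_c_pos {a : ℝ} (ha : 1 ≤ a) : (0:ℝ) < 2 + 1/a := by
  have ha0 : 0 < a := lt_of_lt_of_le one_pos ha
  positivity

lemma Kr_pos {a : ℝ} (ha : 1 ≤ a) : ∀ t : FBT, 0 < Kr a t := by
  intro t; induction t with
  | leaf x => simp [Kr]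
  | node l r ihl ihr => exact div_pos (by linarith) (my_c_pos ha)

lemma Kr_le_one {a : ℝ} (ha : 1 ≤ a) : ∀ t : FBT, Kr a t ≤ 1 := by
  intro t; induction t with
  | leaf x => simp [Kr]
  | node l r ihl ihr =>
    have ha0 : 0 < a := lt_of_lt_of_le one_pos ha
    have h1 : (0:ℝ) ≤ 1/a := by positivity
    rw [Kr, div_le_one (my_c_pos ha)]; linarith

lemma wb_setw {a : ℝ} (ha : 1 ≤ a) : ∀ (s : FBT) (w : ℝ), wb a (setw a s w) = w := by
  intro s; induction s with
  | leaf x => intro w; simp [setw, wb]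
  | node l r ihl ihr =>
    intro w
    have ha0 : 0 < a := lt_of_lt_of_le one_pos ha
    have hc : (2 + 1/a) ≠ 0 := ne_of_gt (my_c_pos ha)
    simp [setw, wb, ihl, ihr, min_self]
    field_simp
    ring

lemma leafSum_setw {a : ℝ} (ha : 1 ≤ a) : ∀ (s : FBT) (w : ℝ),
    leafSum (setw a s w) = w * Kr a s := by
  intro s; induction s with
  | leaf x => intro w; simp [setw, leafSum, Kr]
  | node l r ihl ihr =>
    intro w
    have ha0 : 0 < a := lt_of_lt_of_le one_pos ha
    have hc : (2 + 1/a) ≠ 0 := ne_of_gt (my_c_pos ha)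
    simp [setw, leafSum, Kr, ihl, ihr]
    field_simp

lemma numLeaves_setw {a : ℝ} : ∀ (s : FBT) (w : ℝ),
    numLeaves (setw a s w) = numLeaves s := by
  intro s; induction s with
  | leaf x => intro w; simp [setw, numLeaves]
  | node l r ihl ihr => intro w; simp [setw, numLeaves, ihl, ihr]

lemma nonneg_setw {a : ℝ} (ha : 1 ≤ a) : ∀ (s : FBT) (w : ℝ), 0 ≤ w →
    leavesNonneg (setw a s w) := by
  intro s; induction s with
  | leaf x => intro w hw; simpa [setw, leavesNonneg] using hw
  | node l r ihl ihr =>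
    intro w hw
    have hw' : 0 ≤ w / (2 + 1/a) := div_nonneg hw (le_of_lt (my_c_pos ha))
    exact ⟨ihl _ hw', ihr _ hw'⟩

lemma leafSum_balanced {a : ℝ} (ha : 1 ≤ a) : ∀ t : FBT, balancedFBT a t →
    leafSum t = wb a t * Kr a t := by
  intro t; induction t with
  | leaf x => intro _; simp [leafSum, wb, Kr]
  | node l r ihl ihr =>
    intro hb
    obtain ⟨heq, hbl, hbr⟩ := hb
    have ha0 : 0 < a := lt_of_lt_of_le one_pos ha
    have hc : (2 + 1/a) ≠ 0 := ne_of_gt (my_c_pos ha)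
    simp only [leafSum, wb, Kr, ihl hbl, ihr hbr, ← heq, min_self]
    field_simp
    ring

lemma depth_le_height : ∀ (t : FBT) (d : ℕ), d ∈ leafDepths t → d ≤ heightFBT t := by
  intro t; induction t with
  | leaf x => intro d hd; simp [leafDepths] at hd; simp [hd, heightFBT]
  | node l r ihl ihr =>
    intro d hd
    simp only [leafDepths, List.mem_map, List.mem_append] at hd
    obtain ⟨x, hx, rfl⟩ := hd
    show x + 1 ≤ max (heightFBT l) (heightFBT r) + 1
    rcases hx with h | h
    · exact Nat.succ_le_succ (le_trans (ihl x h) (le_max_left _ _))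
    · exact Nat.succ_le_succ (le_trans (ihr x h) (le_max_right _ _))

lemma grow {a : ℝ} (ha : 1 ≤ a) : ∀ (t : FBT) (d : ℕ), d ∈ leafDepths t →
    ∃ s : FBT, numLeaves s = numLeaves t + 1 ∧ heightFBT t ≤ heightFBT s ∧
      Kr a s = Kr a t - (1/a) / (2 + 1/a) ^ (d + 1) := by
  have ha0 : 0 < a := lt_of_lt_of_le one_pos ha
  have hc : (2 + 1/a) ≠ 0 := ne_of_gt (my_c_pos ha)
  intro t; induction t with
  | leaf x =>
    intro d hd
    simp [leafDepths] at hd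
    subst hd
    refine ⟨.node (.leaf 0) (.leaf 0), by simp [numLeaves], by simp [heightFBT], ?_⟩
    simp [Kr]
    field_simp
    norm_num
  | node l r ihl ihr =>
    intro d hd
    simp only [leafDepths, List.mem_map, List.mem_append] at hd
    obtain ⟨x, hx, rfl⟩ := hd
    rcases hx with h | h
    · obtain ⟨s, h1, h2, h3⟩ := ihl x h
      refine ⟨.node s r, by simp [numLeaves]; omega, ?_, ?_⟩
      · exact Nat.succ_le_succ (max_le_max h2 le_rfl)
      · simp only [Kr, h3, pow_succ]
        field_simp
        ring
    · obtain ⟨s, h1, h2, h3⟩ := ihr x h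
      refine ⟨.node l s, by simp [numLeaves]; omega, ?_, ?_⟩
      · exact Nat.succ_le_succ (max_le_max le_rfl h2)
      · simp only [Kr, h3, pow_succ]
        field_simp
        ring

lemma trim {a : ℝ} (ha : 1 ≤ a) : ∀ t : FBT, 1 ≤ heightFBT t →
    ∃ s : FBT, numLeaves s + 1 = numLeaves t ∧
      Kr a s = Kr a t + (1/a) / (2 + 1/a) ^ heightFBT t := by
  have ha0 : 0 < a := lt_of_lt_of_le one_pos ha
  have hc : (2 + 1/a) ≠ 0 := ne_of_gt (my_c_pos ha)
  intro t; induction t with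
  | leaf x => intro h; simp [heightFBT] at h
  | node l r ihl ihr =>
    intro _
    by_cases hm : max (heightFBT l) (heightFBT r) = 0
    · have hl0 : heightFBT l = 0 := Nat.le_zero.mp (le_trans (le_max_left _ _) (le_of_eq hm))
      have hr0 : heightFBT r = 0 := Nat.le_zero.mp (le_trans (le_max_right _ _) (le_of_eq hm))
      cases l with
      | node _ _ => simp [heightFBT] at hl0
      | leaf x =>
        cases r with
        | node _ _ => simp [heightFBT] at hr0
        | leaf y =>
          refine ⟨.leaf 0, by simp [numLeaves], ?_⟩
          simp [Kr, heightFBT]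
          field_simp
          norm_num
    · by_cases hlr : heightFBT r ≤ heightFBT l
      · have hl1 : 1 ≤ heightFBT l := by
          rw [max_eq_left hlr] at hm; omega
        obtain ⟨s, h1, h2⟩ := ihl hl1
        refine ⟨.node s r, by simp [numLeaves]; omega, ?_⟩
        have hht : heightFBT (.node l r) = heightFBT l + 1 := by
          simp [heightFBT, max_eq_left hlr]
        simp only [Kr, h2, hht, pow_succ]
        field_simp
        ring
      · have hrl : heightFBT l ≤ heightFBT r := le_of_not_ge hlr
        have hr1 : 1 ≤ heightFBT r := by
          rw [max_eq_right hrl] at hm; omega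
        obtain ⟨s, h1, h2⟩ := ihr hr1
        refine ⟨.node l s, by simp [numLeaves]; omega, ?_⟩
        have hht : heightFBT (.node l r) = heightFBT r + 1 := by
          simp [heightFBT, max_eq_right hrl]
        simp only [Kr, h2, hht, pow_succ]
        field_simp
        ring

/-- an `n`-leaf `wb`-balanced full binary tree that maximizes the
effect among all `n`-leaf full binary trees (with nonnegative leaf weights)
must be complete. -/
theorem stmt_16 (a : ℝ) (ha : 1 ≤ a) (t : FBT)
    (hbal : balancedFBT a t) (hnn : leavesNonneg t)
    (hmax : ∀ t' : FBT, leavesNonneg t' → numLeaves t' = numLeaves t →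
      eff a t' ≤ eff a t) :
    completeFBT t := by
  intro d hd
  by_contra hcon
  push_neg at hcon
  obtain ⟨hne1, hne2⟩ := hcon
  have ha0 : 0 < a := lt_of_lt_of_le one_pos ha
  have hcpos : (0:ℝ) < 2 + 1/a := my_c_pos ha
  have hc1 : (1:ℝ) < 2 + 1/a := by
    have : (0:ℝ) < 1/a := by positivity
    linarith
  have hdh : d ≤ heightFBT t := depth_le_height t d hd
  have hd2 : d + 2 ≤ heightFBT t := by omega
  obtain ⟨s1, hn1, hh1, hk1⟩ := grow ha t d hd
  have hh1' : 1 ≤ heightFBT s1 := by omega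
  obtain ⟨s2, hn2, hk2⟩ := trim ha s1 hh1'
  have hlt : Kr a s2 < Kr a t := by
    rw [hk2, hk1]
    have hpow : (2 + 1/a) ^ (d + 1) < (2 + 1/a) ^ heightFBT s1 :=
      pow_lt_pow_right₀ hc1 (by omega)
    have hdiv : (1/a) / (2 + 1/a) ^ heightFBT s1 < (1/a) / (2 + 1/a) ^ (d + 1) :=
      div_lt_div_of_pos_left (by positivity) (by positivity) hpow
    linarith
  have hk2pos : 0 < Kr a s2 := Kr_pos ha s2
  have hktpos : 0 < Kr a t := Kr_pos ha t
  have heff' : eff a (setw a s2 1) = 1 / Kr a s2 := by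
    unfold eff
    rw [leafSum_setw ha, wb_setw ha, one_mul, if_pos hk2pos]
  have hnum : numLeaves (setw a s2 1) = numLeaves t := by
    rw [numLeaves_setw]; omega
  have hmx := hmax (setw a s2 1) (nonneg_setw ha s2 1 zero_le_one) hnum
  rw [heff'] at hmx
  by_cases hpos : 0 < leafSum t
  · have hls : leafSum t = wb a t * Kr a t := leafSum_balanced ha t hbal
    have hwbpos : 0 < wb a t := by
      by_contra hw
      push_neg at hw
      nlinarith
    have hefft : eff a t = 1 / Kr a t := by
      unfold eff
      rw [if_pos hpos, hls, div_mul_cancel_left₀ (ne_of_gt hwbpos), one_div]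
    rw [hefft] at hmx
    have : Kr a t ≤ Kr a s2 := by have := (div_le_div_iff₀ hk2pos hktpos).mp hmx; linarith
    linarith
  · have hefft : eff a t = 1 := by unfold eff; rw [if_neg hpos]
    rw [hefft] at hmx
    have hk2lt1 : Kr a s2 < 1 := lt_of_lt_of_le hlt (Kr_le_one ha t)
    have : 1 < 1 / Kr a s2 := by
      rw [lt_div_iff₀ hk2pos, one_mul]; exact hk2lt1
    linarith
end

section
/- For every alpha >= 1, the effect of any n-leaf full binary tree with nonnegative leaf weights, under the recursion wb(x)=wb(y)+wb(z)+(1/alpha)*min{wb(y),wb(z)}, is at most C * n^{log2(1 + 1/(2*alpha))} for some absolute constant C: i.e., wb(root) <= C * n^{log2(1+1/(2alpha))} * (sum of leaf weights). -/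
lemma kink_ineq (x y c : ℝ) (hx : 0 ≤ x) (hy : 0 ≤ y) (hc : 0 ≤ c) :
    2 * (2:ℝ)^c * (x^c * y^c) ≤ (x+y)^c * (x^c + y^c) := by
  rcases eq_or_lt_of_le hc with hc0 | hc0
  · simp [← hc0]; norm_num
  rcases eq_or_lt_of_le hx with hx0 | hx0
  · rw [← hx0, Real.zero_rpow (ne_of_gt hc0)]
    have h1 : (0:ℝ) ≤ (0+y)^c := Real.rpow_nonneg (by linarith) c
    have h2 : (0:ℝ) ≤ y^c := Real.rpow_nonneg hy c
    nlinarith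
  rcases eq_or_lt_of_le hy with hy0 | hy0
  · rw [← hy0, Real.zero_rpow (ne_of_gt hc0)]
    have h1 : (0:ℝ) ≤ (x+0)^c := Real.rpow_nonneg (by linarith) c
    have h2 : (0:ℝ) ≤ x^c := Real.rpow_nonneg hx c
    nlinarith
  set A := x ^ (c/2) with hA
  set B := y ^ (c/2) with hB
  have hApos : 0 < A := Real.rpow_pos_of_pos hx0 _
  have hBpos : 0 < B := Real.rpow_pos_of_pos hy0 _
  have hxc : x ^ c = A * A := by rw [hA, ← Real.rpow_add hx0]; ring_nf
  have hyc : y ^ c = B * B := by rw [hB, ← Real.rpow_add hy0]; ring_nf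
  have h2 : 2 * (A * B) ≤ x^c + y^c := by
    rw [hxc, hyc]; nlinarith [sq_nonneg (A - B)]
  have hsx := Real.sqrt_nonneg x
  have hsy := Real.sqrt_nonneg y
  have h3 : 2 * Real.sqrt x * Real.sqrt y ≤ x + y := by
    nlinarith [sq_nonneg (Real.sqrt x - Real.sqrt y), Real.sq_sqrt hx, Real.sq_sqrt hy]
  have h4 : (2 * Real.sqrt x * Real.sqrt y) ^ c ≤ (x+y)^c :=
    Real.rpow_le_rpow (by positivity) h3 hc
  have hsxc : (Real.sqrt x)^c = A := by
    rw [Real.sqrt_eq_rpow, ← Real.rpow_mul hx, hA]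
    congr 1; ring
  have hsyc : (Real.sqrt y)^c = B := by
    rw [Real.sqrt_eq_rpow, ← Real.rpow_mul hy, hB]
    congr 1; ring
  have h5 : (2 * Real.sqrt x * Real.sqrt y) ^ c = (2:ℝ)^c * A * B := by
    rw [Real.mul_rpow (by positivity) hsy, Real.mul_rpow (by norm_num) hsx, hsxc, hsyc]
  rw [h5] at h4
  have h2c : (0:ℝ) < (2:ℝ)^c := by positivity
  calc 2 * (2:ℝ)^c * (x^c * y^c) = ((2:ℝ)^c * A * B) * (2 * (A*B)) := by
        rw [hxc, hyc]; ring
    _ ≤ (x+y)^c * (x^c + y^c) := by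
        apply mul_le_mul h4 h2 (by positivity) (Real.rpow_nonneg (by linarith) c)

lemma lemA (P Q R S T b : ℝ) (hP : 0 < P) (hS : 0 ≤ S) (hT : 0 ≤ T)
    (hb : 1 ≤ b) (hPR : P ≤ R) (hQR : Q ≤ R)
    (hkink : 2*b*(P*Q) ≤ R*(P+Q)) (huv : P*S ≤ Q*T) :
    P*S + Q*T + 2*(b-1)*(P*S) ≤ R*(S+T) := by
  by_cases h : (2*b-1)*P ≤ R
  · have h1 : 2*(b-1)*(P*S) ≤ (R-P)*S := by nlinarith
    have h2 : Q*T ≤ R*T := by nlinarith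
    nlinarith
  · push_neg at h
    have h1 : 2*b*(P*Q)*T ≤ R*(P+Q)*T := by nlinarith
    have h2 : ((2*b-1)*P - R)*(P*S) ≤ ((2*b-1)*P - R)*(Q*T) := by nlinarith
    have key : P*(P*S + Q*T + 2*(b-1)*(P*S)) ≤ P*(R*(S+T)) := by nlinarith
    exact le_of_mul_le_mul_left key hP

lemma leafSum_nonneg (t : FBT) (h : leavesNonneg t) : 0 ≤ leafSum t := by
  induction t with
  | leaf x => exact h
  | node l r ihl ihr =>
    obtain ⟨hl, hr⟩ := h
    have := ihl hl; have := ihr hr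
    simp only [leafSum]; linarith

lemma numLeaves_pos (t : FBT) : 1 ≤ numLeaves t := by
  induction t with
  | leaf x => simp [numLeaves]
  | node l r ihl ihr => simp only [numLeaves]; omega

lemma main_bound (a : ℝ) (ha : 1 ≤ a) : ∀ t : FBT, leavesNonneg t →
    wb a t ≤ (numLeaves t : ℝ) ^ (Real.logb 2 (1 + 1/(2*a))) * leafSum t := by
  set c := Real.logb 2 (1 + 1/(2*a)) with hc
  have ha0 : 0 < a := by linarith
  have hbase : (1:ℝ) < 1 + 1/(2*a) := by
    have : 0 < 1/(2*a) := by positivity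
    linarith
  have hcpos : 0 ≤ c := Real.logb_nonneg (by norm_num) (le_of_lt hbase)
  have hbeta : (2:ℝ)^c = 1 + 1/(2*a) :=
    Real.rpow_logb (by norm_num) (by norm_num) (by linarith)
  have hbge : (1:ℝ) ≤ (2:ℝ)^c := by rw [hbeta]; linarith
  have hinva : 1/a = 2*((2:ℝ)^c - 1) := by
    rw [hbeta]; field_simp; ring
  intro t
  induction t with
  | leaf x =>
    intro _
    simp only [wb, numLeaves, leafSum, Nat.cast_one, Real.one_rpow, one_mul, le_refl]
  | node l r ihl ihr =>
    intro ht
    obtain ⟨hl, hr⟩ := ht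
    have IHl := ihl hl
    have IHr := ihr hr
    set m := numLeaves l with hm
    set n := numLeaves r with hn
    set S := leafSum l with hS
    set T := leafSum r with hT
    have hSnn : 0 ≤ S := leafSum_nonneg l hl
    have hTnn : 0 ≤ T := leafSum_nonneg r hr
    have hm1 : (1:ℝ) ≤ (m:ℝ) := by exact_mod_cast numLeaves_pos l
    have hn1 : (1:ℝ) ≤ (n:ℝ) := by exact_mod_cast numLeaves_pos r
    set P := (m:ℝ)^c with hP
    set Q := (n:ℝ)^c with hQ
    set R := ((m:ℝ)+(n:ℝ))^c with hR
    have hPpos : 0 < P := Real.rpow_pos_of_pos (by linarith) _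
    have hQpos : 0 < Q := Real.rpow_pos_of_pos (by linarith) _
    have hPR : P ≤ R := Real.rpow_le_rpow (by linarith) (by linarith) hcpos
    have hQR : Q ≤ R := Real.rpow_le_rpow (by linarith) (by linarith) hcpos
    have hkink : 2*(2:ℝ)^c*(P*Q) ≤ R*(P+Q) := by
      have := kink_ineq (m:ℝ) (n:ℝ) c (by linarith) (by linarith) hcpos
      rw [hP, hQ, hR]; nlinarith
    -- monotonicity step
    have hminle : min (wb a l) (wb a r) ≤ min (P*S) (Q*T) :=
      le_min ((min_le_left _ _).trans IHl) ((min_le_right _ _).trans IHr)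
    have hstep : wb a (FBT.node l r) ≤ P*S + Q*T + (1/a) * min (P*S) (Q*T) := by
      simp only [wb]
      have h1 : (1/a) * min (wb a l) (wb a r) ≤ (1/a) * min (P*S) (Q*T) :=
        mul_le_mul_of_nonneg_left hminle (by positivity)
      linarith
    have hgoal : P*S + Q*T + (1/a) * min (P*S) (Q*T) ≤ R*(S+T) := by
      rw [hinva]
      rcases le_total (P*S) (Q*T) with huv | huv
      · rw [min_eq_left huv]
        exact lemA P Q R S T ((2:ℝ)^c) hPpos hSnn hTnn hbge hPR hQR hkink huv
      · rw [min_eq_right huv]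
        have := lemA Q P R T S ((2:ℝ)^c) hQpos hTnn hSnn hbge hQR hPR
          (by nlinarith) huv
        linarith
    have hcast : ((numLeaves (FBT.node l r) : ℕ) : ℝ) = (m:ℝ) + (n:ℝ) := by
      simp [numLeaves, hm, hn]
    calc wb a (FBT.node l r) ≤ P*S + Q*T + (1/a) * min (P*S) (Q*T) := hstep
      _ ≤ R*(S+T) := hgoal
      _ = (numLeaves (FBT.node l r) : ℝ)^c * leafSum (FBT.node l r) := by
          rw [hR, hcast]; simp [leafSum, hS, hT]

/-- there is an absolute constant `C` such that for every
`a ≥ 1`, the effect of any `n`-leaf full binary tree with nonnegative leaf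
weights of positive total is at most `C · n^(log₂(1 + 1/(2a)))`, i.e.,
`wb(root) ≤ C · n^(log₂(1 + 1/(2a))) · (sum of leaf weights)`. -/
theorem stmt_17 :
    ∃ C : ℝ, 0 < C ∧
      ∀ a : ℝ, 1 ≤ a → ∀ t : FBT, leavesNonneg t → 0 < leafSum t →
        wb a t ≤
          C * (numLeaves t : ℝ) ^ (Real.logb 2 (1 + 1/(2*a))) * leafSum t := by
  refine ⟨1, one_pos, ?_⟩
  intro a ha t ht _
  rw [one_mul]
  exact main_bound a ha t ht
end
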